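/- arXiv:1109.1446 — 5 statements merged into one kernel-verified Lean document; each statement's English description precedes it below -/
import Mathlib

section
/- Let (v_j)_{j∈ℤ} be a sequence in ℝ^m, (ψ_j)_{j∈ℤ} a sequence in ℝ, and (f_{j+1/2})_{j∈ℤ} a sequence in ℝ^m satisfying the entropy conservation relation ⟨v_{j+1} - v_j, f_{j+1/2}⟩ = ψ_{j+1} - ψ_j for all j. Then for every j one has the telescoping identity ⟨v_j, f_{j+1/2} - f_{j-1/2}⟩ = q̃_{j+1/2} - q̃_{j-1/2}, where q̃_{j+1/2} = ⟨(v_j + v_{j+1})/2, f_{j+1/2}⟩ - (ψ_j + ψ_{j+1})/2. -/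
open Matrix

/-! Entropy conservation across an interface says that `⟨v_j, f_{j+1/2}⟩ - ψ_j` and
`⟨v_{j+1}, f_{j+1/2}⟩ - ψ_{j+1}` agree, so both equal their average `q̃_{j+1/2}`. Writing
`q̃_{j+1/2}` in the first form and `q̃_{j-1/2}` in the second, the `ψ_j` cancel. -/

section

variable {K ι : Type*} [Field K] [NeZero (2 : K)] [Fintype ι]

def averagedEntropyFlux (v w f : ι → K) (ψ χ : K) : K :=
  ((1 / 2 : K) • (v + w)) ⬝ᵥ f - (ψ + χ) / 2

variable {v w f : ι → K} {ψ χ : K}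

theorem averagedEntropyFlux_eq_left (h : (w - v) ⬝ᵥ f = χ - ψ) :
    averagedEntropyFlux v w f ψ χ = v ⬝ᵥ f - ψ := by
  rw [sub_dotProduct] at h
  simp only [averagedEntropyFlux, smul_dotProduct, add_dotProduct, smul_eq_mul]
  field_simp
  linear_combination h

theorem averagedEntropyFlux_eq_right (h : (w - v) ⬝ᵥ f = χ - ψ) :
    averagedEntropyFlux v w f ψ χ = w ⬝ᵥ f - χ := by
  rw [averagedEntropyFlux_eq_left h]
  rw [sub_dotProduct] at h
  linear_combination -h

end

/-- **Tadmor's lemma.** If a sequence of interface fluxes `f j` (representing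
`f_{j+1/2}`) satisfies the entropy conservation relation
`⟨v_{j+1} - v_j, f_{j+1/2}⟩ = ψ_{j+1} - ψ_j`, then
`⟨v_j, f_{j+1/2} - f_{j-1/2}⟩ = q̃_{j+1/2} - q̃_{j-1/2}` with
`q̃_{j+1/2} = ⟨(v_j + v_{j+1})/2, f_{j+1/2}⟩ - (ψ_j + ψ_{j+1})/2`. -/
theorem tadmor_telescoping_identity (m : ℕ)
    (v : ℤ → (Fin m → ℝ)) (ψ : ℤ → ℝ) (f : ℤ → (Fin m → ℝ))
    (hEC : ∀ j : ℤ, (v (j + 1) - v j) ⬝ᵥ f j = ψ (j + 1) - ψ j)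
    (qt : ℤ → ℝ)
    (hqt : ∀ j : ℤ, qt j = ((1 / 2 : ℝ) • (v j + v (j + 1))) ⬝ᵥ f j - (ψ j + ψ (j + 1)) / 2) :
    ∀ j : ℤ, v j ⬝ᵥ (f j - f (j - 1)) = qt j - qt (j - 1) := by
  intro j
  have hEC_prev : (v j - v (j - 1)) ⬝ᵥ f (j - 1) = ψ j - ψ (j - 1) := by
    simpa only [sub_add_cancel] using hEC (j - 1)
  calc v j ⬝ᵥ (f j - f (j - 1)) = (v j ⬝ᵥ f j - ψ j) - (v j ⬝ᵥ f (j - 1) - ψ j) := by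
        rw [dotProduct_sub]; ring
    _ = averagedEntropyFlux (v j) (v (j + 1)) (f j) (ψ j) (ψ (j + 1))
          - averagedEntropyFlux (v (j - 1)) (v j) (f (j - 1)) (ψ (j - 1)) (ψ j) := by
        rw [averagedEntropyFlux_eq_left (hEC j), averagedEntropyFlux_eq_right hEC_prev]
    _ = qt j - qt (j - 1) := by
        rw [hqt j, hqt (j - 1), sub_add_cancel]; rfl
end

section
/- Consider the semi-discrete CND finite difference scheme d/dt U_j(t) = -(1/Δx)(F_{j+1/2} - F_{j-1/2}) with numerical flux F_{j+1/2} = F*(U_j, U_{j+1}) - (c/2) B(U(V̂_{j+1/2}))(U_{j+1} - U_j), where F* is an entropy conservative flux, c ≥ 0 is a constant, and for each interface there exists an averaged state V̂_{j+1/2}(t) with U_{j+1} - U_j = U_V(V̂_{j+1/2})(V(U_{j+1}) - V(U_j)). Then every C¹ solution (U_j)_{j∈ℤ} of the scheme satisfies the exact discrete entropy balance d/dt S(U_j(t)) + (Q̂_{j+1/2} - Q̂_{j-1/2})/Δx = -(c/(4Δx))[⟨V(U_{j+1})-V(U_j), B(U(V̂_{j+1/2})) U_V(V̂_{j+1/2})(V(U_{j+1})-V(U_j))⟩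 + ⟨V(U_j)-V(U_{j-1}), B(U(V̂_{j-1/2})) U_V(V̂_{j-1/2})(V(U_j)-V(U_{j-1}))⟩], where Q̂_{j+1/2} = ⟨(V(U_j)+V(U_{j+1}))/2, F*(U_j,U_{j+1})⟩ - (Ψ(U_j)+Ψ(U_{j+1}))/2 - (c/2)⟨(V(U_j)+V(U_{j+1}))/2, B(U(V̂_{j+1/2}))(U_{j+1}-U_j)⟩. -/
open scoped RealInnerProductSpace

/-!
Along a solution, `d/dt S(U_j) = ⟪V_j, U_j'⟫ = -(1/Δx) ⟪V_j, F_{j+1/2} - F_{j-1/2}⟫`. Entropy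
conservation of `F*` is exactly what makes the pairing of a numerical flux with either of its
two adjacent entropy variables differ from `Q̂` only by the entropy potential of that state and
a quarter of the diffusive production `c ⟪ΔV, B ΔU⟫`. The potentials cancel between the two
interfaces of a cell, and `ΔU = U_V(V̂) ΔV` turns the production into the stated quadratic form.
-/

section InterfaceIdentities

variable {E : Type*} [NormedAddCommGroup E] [InnerProductSpace ℝ E]

/-- The numerical entropy flux `Q̂` at an interface with left and right entropy variables
`va`, `vb`, entropy potentials `ψa`, `ψb`, entropy conservative flux `f` and jump term `d`. -/
noncomputable def cndEntropyFlux (c ψa ψb : ℝ) (va vb f d : E) : ℝ :=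
  ⟪(1 / 2 : ℝ) • (va + vb), f⟫ - (ψa + ψb) / 2 - (c / 2) * ⟪(1 / 2 : ℝ) • (va + vb), d⟫

variable {c ψa ψb : ℝ} {va vb f d : E}

theorem inner_left_sub_cndEntropyFlux (hEC : ⟪vb - va, f⟫ = ψb - ψa) :
    ⟪va, f - (c / 2) • d⟫ - cndEntropyFlux c ψa ψb va vb f d = ψa + c / 4 * ⟪vb - va, d⟫ := by
  simp only [cndEntropyFlux, inner_sub_left, inner_sub_right, inner_add_left,
    real_inner_smul_left, real_inner_smul_right] at hEC ⊢
  linear_combination (-1 / 2 : ℝ) * hEC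

theorem inner_right_sub_cndEntropyFlux (hEC : ⟪vb - va, f⟫ = ψb - ψa) :
    ⟪vb, f - (c / 2) • d⟫ - cndEntropyFlux c ψa ψb va vb f d = ψb - c / 4 * ⟪vb - va, d⟫ := by
  simp only [cndEntropyFlux, inner_sub_left, inner_sub_right, inner_add_left,
    real_inner_smul_left, real_inner_smul_right] at hEC ⊢
  linear_combination (1 / 2 : ℝ) * hEC

/-- The entropy balance of one cell with entropy variable `v` and potential `ψ`, between a
left interface `(vl, v, fl, dl)` and a right interface `(v, vr, fr, dr)`. -/
theorem cndEntropyFlux_cell_balance {Δx ψl ψ ψr : ℝ} {vl v vr fl fr dl dr : E}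
    (hECl : ⟪v - vl, fl⟫ = ψ - ψl) (hECr : ⟪vr - v, fr⟫ = ψr - ψ) :
    ⟪v, -(1 / Δx) • ((fr - (c / 2) • dr) - (fl - (c / 2) • dl))⟫
        + (cndEntropyFlux c ψ ψr v vr fr dr - cndEntropyFlux c ψl ψ vl v fl dl) / Δx
      = -(c / (4 * Δx)) * (⟪vr - v, dr⟫ + ⟪v - vl, dl⟫) := by
  have hr := inner_left_sub_cndEntropyFlux (c := c) (d := dr) hECr
  have hl := inner_right_sub_cndEntropyFlux (c := c) (d := dl) hECl
  rw [real_inner_smul_right, inner_sub_right]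
  linear_combination (-1 / Δx) * hr + (1 / Δx) * hl

end InterfaceIdentities

theorem HasGradientAt.comp_hasDerivAt {E : Type*} [NormedAddCommGroup E] [InnerProductSpace ℝ E]
    [CompleteSpace E] {S : E → ℝ} {v : E} {u : ℝ → E} {u' : E} {t : ℝ}
    (hS : HasGradientAt S v (u t)) (hu : HasDerivAt u u' t) :
    HasDerivAt (fun s => S (u s)) ⟪v, u'⟫ t :=
  hS.hasFDerivAt.comp_hasDerivAt t hu

theorem cnd_scheme_discrete_entropy_balance_general (m : ℕ) (Δx c : ℝ)
    -- entropy, entropy flux and flux of the system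
    (S : EuclideanSpace ℝ (Fin m) → ℝ)
    -- entropy variables `V = ∇S`
    (V : EuclideanSpace ℝ (Fin m) → EuclideanSpace ℝ (Fin m))
    (hV : ∀ u, HasGradientAt S (V u) u)
    -- inverse map `v ↦ U(v)` of the entropy variables, with Jacobian `U_V`
    (Umap : EuclideanSpace ℝ (Fin m) → EuclideanSpace ℝ (Fin m))
    (UV : EuclideanSpace ℝ (Fin m) → (EuclideanSpace ℝ (Fin m) →L[ℝ] EuclideanSpace ℝ (Fin m)))
    -- an arbitrary viscosity matrix
    (B : EuclideanSpace ℝ (Fin m) → (EuclideanSpace ℝ (Fin m) →L[ℝ] EuclideanSpace ℝ (Fin m)))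
    -- entropy potential
    (Ψ : EuclideanSpace ℝ (Fin m) → ℝ)
    -- entropy conservative numerical flux
    (Fstar : EuclideanSpace ℝ (Fin m) → EuclideanSpace ℝ (Fin m) → EuclideanSpace ℝ (Fin m))
    (hEC : ∀ a b, ⟪V b - V a, Fstar a b⟫ = Ψ b - Ψ a)
    -- a C¹ solution of the semi-discrete scheme
    (U : ℤ → ℝ → EuclideanSpace ℝ (Fin m))
    -- averaged states `V̂_{j+1/2}` at each interface
    (Vhat : ℤ → ℝ → EuclideanSpace ℝ (Fin m))
    (hVhat : ∀ j t, U (j + 1) t - U j t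
      = UV (Vhat j t) (V (U (j + 1) t) - V (U j t)))
    -- the CND numerical flux `F_{j+1/2}`
    (Flux : ℤ → ℝ → EuclideanSpace ℝ (Fin m))
    (hFlux : ∀ j t, Flux j t = Fstar (U j t) (U (j + 1) t)
      - (c / 2) • (B (Umap (Vhat j t))) (U (j + 1) t - U j t))
    -- the semi-discrete scheme `d/dt U_j = -(1/Δx)(F_{j+1/2} - F_{j-1/2})`
    (hscheme : ∀ j t, HasDerivAt (U j) (-(1 / Δx) • (Flux j t - Flux (j - 1) t)) t)
    -- the numerical entropy flux `Q̂_{j+1/2}`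
    (Qhat : ℤ → ℝ → ℝ)
    (hQhat : ∀ j t, Qhat j t =
      ⟪(1 / 2 : ℝ) • (V (U j t) + V (U (j + 1) t)), Fstar (U j t) (U (j + 1) t)⟫
        - (Ψ (U j t) + Ψ (U (j + 1) t)) / 2
        - (c / 2) * ⟪(1 / 2 : ℝ) • (V (U j t) + V (U (j + 1) t)),
            (B (Umap (Vhat j t))) (U (j + 1) t - U j t)⟫) :
    -- exact discrete entropy balance
    ∀ (j : ℤ) (t : ℝ),
      deriv (fun s => S (U j s)) t + (Qhat j t - Qhat (j - 1) t) / Δx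
        = -(c / (4 * Δx)) *
          (⟪V (U (j + 1) t) - V (U j t),
              (B (Umap (Vhat j t))) (UV (Vhat j t) (V (U (j + 1) t) - V (U j t)))⟫
            + ⟪V (U j t) - V (U (j - 1) t),
              (B (Umap (Vhat (j - 1) t)))
                (UV (Vhat (j - 1) t) (V (U j t) - V (U (j - 1) t)))⟫) := by
  intro j t
  have hprev : j - 1 + 1 = j := sub_add_cancel j 1
  have hVhat_prev := hVhat (j - 1) t
  rw [hprev] at hVhat_prev
  rw [((hV _).comp_hasDerivAt (hscheme j t)).deriv, hQhat, hQhat, hFlux, hFlux, hprev,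
    ← hVhat, ← hVhat_prev]
  exact cndEntropyFlux_cell_balance (hEC _ _) (hEC _ _)

/-- The semi-discrete CND scheme, built from an entropy conservative flux `F*` and
the numerical diffusion operator `(c/2) B(U(V̂_{j+1/2})) (U_{j+1} - U_j)`, satisfies an
exact discrete entropy balance: the entropy production is given by the two
quadratic interface terms. -/
theorem cnd_scheme_discrete_entropy_balance (m : ℕ) (Δx c : ℝ)
    (hΔx : 0 < Δx) (hc : 0 ≤ c)
    -- entropy, entropy flux and flux of the system
    (S Q : EuclideanSpace ℝ (Fin m) → ℝ)
    (F : EuclideanSpace ℝ (Fin m) → EuclideanSpace ℝ (Fin m))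
    -- entropy variables `V = ∇S`
    (V : EuclideanSpace ℝ (Fin m) → EuclideanSpace ℝ (Fin m))
    (hV : ∀ u, HasGradientAt S (V u) u)
    -- inverse map `v ↦ U(v)` of the entropy variables, with Jacobian `U_V`
    (Umap : EuclideanSpace ℝ (Fin m) → EuclideanSpace ℝ (Fin m))
    (hUmap : ∀ u, Umap (V u) = u)
    (UV : EuclideanSpace ℝ (Fin m) → (EuclideanSpace ℝ (Fin m) →L[ℝ] EuclideanSpace ℝ (Fin m)))
    (hUV : ∀ v, HasFDerivAt Umap (UV v) v)
    -- an arbitrary viscosity matrix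
    (B : EuclideanSpace ℝ (Fin m) → (EuclideanSpace ℝ (Fin m) →L[ℝ] EuclideanSpace ℝ (Fin m)))
    -- entropy potential
    (Ψ : EuclideanSpace ℝ (Fin m) → ℝ)
    (hΨ : ∀ u, Ψ u = ⟪V u, F u⟫ - Q u)
    -- entropy conservative numerical flux
    (Fstar : EuclideanSpace ℝ (Fin m) → EuclideanSpace ℝ (Fin m) → EuclideanSpace ℝ (Fin m))
    (hEC : ∀ a b, ⟪V b - V a, Fstar a b⟫ = Ψ b - Ψ a)
    -- a C¹ solution of the semi-discrete scheme
    (U : ℤ → ℝ → EuclideanSpace ℝ (Fin m))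
    (hC1 : ∀ j, ContDiff ℝ 1 (U j))
    -- averaged states `V̂_{j+1/2}` at each interface
    (Vhat : ℤ → ℝ → EuclideanSpace ℝ (Fin m))
    (hVhat : ∀ j t, U (j + 1) t - U j t
      = UV (Vhat j t) (V (U (j + 1) t) - V (U j t)))
    -- the CND numerical flux `F_{j+1/2}`
    (Flux : ℤ → ℝ → EuclideanSpace ℝ (Fin m))
    (hFlux : ∀ j t, Flux j t = Fstar (U j t) (U (j + 1) t)
      - (c / 2) • (B (Umap (Vhat j t))) (U (j + 1) t - U j t))
    -- the semi-discrete scheme `d/dt U_j = -(1/Δx)(F_{j+1/2} - F_{j-1/2})`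
    (hscheme : ∀ j t, HasDerivAt (U j) (-(1 / Δx) • (Flux j t - Flux (j - 1) t)) t)
    -- the numerical entropy flux `Q̂_{j+1/2}`
    (Qhat : ℤ → ℝ → ℝ)
    (hQhat : ∀ j t, Qhat j t =
      ⟪(1 / 2 : ℝ) • (V (U j t) + V (U (j + 1) t)), Fstar (U j t) (U (j + 1) t)⟫
        - (Ψ (U j t) + Ψ (U (j + 1) t)) / 2
        - (c / 2) * ⟪(1 / 2 : ℝ) • (V (U j t) + V (U (j + 1) t)),
            (B (Umap (Vhat j t))) (U (j + 1) t - U j t)⟫) :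
    -- exact discrete entropy balance
    ∀ (j : ℤ) (t : ℝ),
      deriv (fun s => S (U j s)) t + (Qhat j t - Qhat (j - 1) t) / Δx
        = -(c / (4 * Δx)) *
          (⟪V (U (j + 1) t) - V (U j t),
              (B (Umap (Vhat j t))) (UV (Vhat j t) (V (U (j + 1) t) - V (U j t)))⟫
            + ⟪V (U j t) - V (U (j - 1) t),
              (B (Umap (Vhat (j - 1) t)))
                (UV (Vhat (j - 1) t) (V (U j t) - V (U (j - 1) t)))⟫) :=
  cnd_scheme_discrete_entropy_balance_general m Δx c S V hV Umap UV B Ψ Fstar hEC U Vhat hVhat Flux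
    hFlux hscheme Qhat hQhat
end

section
/- Let A be a real m×m matrix with m distinct real nonzero eigenvalues λ_1 < ... < λ_k < 0 < λ_{k+1} < ... < λ_m (for some 1 ≤ k < m) and corresponding eigenvectors R_1, ..., R_m. Let R̃_1, ..., R̃_k ∈ ℝ^m be vectors such that {R̃_1, ..., R̃_k, R_{k+1}, ..., R_m} is a basis of ℝ^m. Given U_l, U_0 ∈ ℝ^m, there exist unique coefficients (α_1, ..., α_m) with U_l + Σ_{i=1}^k α_i R̃_i + Σ_{i=k+1}^m α_i R_i = U_0. Set Ū = U_l + Σ_{i=1}^k α_i R̃_i and define U: (0,∞) × (0,∞) → ℝ^m by U(x,t) = Ū for 0 < x < λ_{k+1} t, U(x,t) = Ū + Σ_{i=k+1}^j α_i R_i for λ_j t < x < λ_{j+1} t (j = k+1, ..., m-1), and U(x,t) = U_0 for x > λ_m t. Then: (a) for every smooth test function φ compactly supported in (0,∞) × [0,∞), ∫_0^∞ ∫_0^∞ [⟨U, ∂_t φ⟩ + ⟨A U, ∂_x φ⟩] dx dt + ∫_0^∞ ⟨U_0, φ(x,0)⟩ dx = 0; (b) for every t > 0, lim_{x→0⁺}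 U(x,t) = Ū, and U_l - Ū belongs to the span of {R̃_1, ..., R̃_k}. -/
open Matrix MeasureTheory

namespace BRP

open Set

/-- product of restrictions of Lebesgue measure to the open quarter plane, coords `(t,x)` -/
noncomputable def mu2 : Measure (ℝ × ℝ) :=
  (volume.restrict (Ioi 0)).prod (volume.restrict (Ioi 0))

variable {ψ : ℝ × ℝ → ℝ}

theorem hasDerivAt_snd' (hψ : ContDiff ℝ (⊤ : ℕ∞) ψ) (x t : ℝ) :
    HasDerivAt (fun s => ψ (x, s)) (fderiv ℝ ψ (x, t) (0, 1)) t := by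
  exact ((hψ.differentiable (by simp) (x, t)).hasFDerivAt).comp_hasDerivAt t
    (HasDerivAt.prodMk (hasDerivAt_const t x) (hasDerivAt_id t))

theorem cont_pd (hψ : ContDiff ℝ (⊤ : ℕ∞) ψ) (v : ℝ × ℝ) :
    Continuous (fun p => fderiv ℝ ψ p v) :=
  (hψ.continuous_fderiv (by simp)).clm_apply continuous_const

theorem graph_cs (hcs : HasCompactSupport ψ) (g : ℝ → ℝ) :
    HasCompactSupport (fun y => ψ (y, g y)) := by
  apply HasCompactSupport.intro (hcs.image continuous_fst)
  intro y hy
  by_contra h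
  exact hy ⟨(y, g y), subset_closure h, rfl⟩

theorem slice_snd_cs (hcs : HasCompactSupport ψ) (x : ℝ) :
    HasCompactSupport (fun s => ψ (x, s)) := by
  apply HasCompactSupport.intro (hcs.image continuous_snd)
  intro s hs
  by_contra h
  exact hs ⟨(x, s), subset_closure h, rfl⟩

theorem ftc_fst (hψ : ContDiff ℝ (⊤ : ℕ∞) ψ) (hcs : HasCompactSupport ψ) (t a : ℝ) :
    ∫ x in Ioi a, fderiv ℝ ψ (x, t) (1, 0) = -ψ (a, t) := by
  have hc1 : ContDiff ℝ 1 fun y => ψ (y, t) :=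
    (hψ.of_le (by simp)).comp (contDiff_id.prodMk contDiff_const)
  have h := (graph_cs hcs (fun _ => t)).integral_Ioi_deriv_eq hc1 a
  rw [← h]
  refine setIntegral_congr_fun measurableSet_Ioi (fun x _ => ?_)
  exact ((((hψ.differentiable (by simp) (x, t)).hasFDerivAt).comp_hasDerivAt x
    (HasDerivAt.prodMk (hasDerivAt_id x) (hasDerivAt_const x t))).deriv).symm

theorem ftc_snd (hψ : ContDiff ℝ (⊤ : ℕ∞) ψ) (hcs : HasCompactSupport ψ) (x : ℝ) :
    ∫ t in Ioi (0:ℝ), fderiv ℝ ψ (x, t) (0, 1) = -ψ (x, 0) := by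
  have hc1 : ContDiff ℝ 1 fun s => ψ (x, s) :=
    (hψ.of_le (by simp)).comp (contDiff_const.prodMk contDiff_id)
  have h := (slice_snd_cs hcs x).integral_Ioi_deriv_eq hc1 0
  rw [← h]
  refine setIntegral_congr_fun measurableSet_Ioi (fun t _ => ?_)
  exact ((hasDerivAt_snd' hψ x t).deriv).symm

theorem ftc_snd_Ioo (hψ : ContDiff ℝ (⊤ : ℕ∞) ψ) (x b : ℝ) (hb : 0 ≤ b) :
    ∫ t in Ioo (0:ℝ) b, fderiv ℝ ψ (x, t) (0, 1) = ψ (x, b) - ψ (x, 0) := by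
  rw [← integral_Ioc_eq_integral_Ioo, ← intervalIntegral.integral_of_le hb]
  exact intervalIntegral.integral_eq_sub_of_hasDerivAt
    (fun t _ => hasDerivAt_snd' hψ x t)
    (((cont_pd hψ (0,1)).comp (continuous_const.prodMk continuous_id)).intervalIntegrable 0 b)

/-- integrability of a swapped partial derivative on the quarter plane -/
theorem integrableK (hψ : ContDiff ℝ (⊤ : ℕ∞) ψ) (hcs : HasCompactSupport ψ) (v : ℝ × ℝ) :
    Integrable (fun p : ℝ × ℝ => fderiv ℝ ψ (p.2, p.1) v) mu2 := by
  have hcont : Continuous (fun p : ℝ × ℝ => fderiv ℝ ψ (p.2, p.1) v) :=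
    (cont_pd hψ v).comp continuous_swap
  have hcsK : HasCompactSupport (fun p : ℝ × ℝ => fderiv ℝ ψ (p.2, p.1) v) :=
    (hcs.fderiv_apply ℝ v).comp_isClosedEmbedding
      (Homeomorph.prodComm ℝ ℝ).isClosedEmbedding
  have hint : Integrable (fun p : ℝ × ℝ => fderiv ℝ ψ (p.2, p.1) v) volume :=
    hcont.integrable_of_hasCompactSupport hcsK
  rw [mu2, Measure.prod_restrict, ← Measure.volume_eq_prod]
  exact hint.restrict

/-- constant state, time-derivative part -/
theorem int_snd_part (hψ : ContDiff ℝ (⊤ : ℕ∞) ψ) (hcs : HasCompactSupport ψ) :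
    ∫ p, fderiv ℝ ψ (p.2, p.1) (0, 1) ∂mu2 = -∫ x in Ioi (0:ℝ), ψ (x, 0) := by
  have hint : Integrable (Function.uncurry fun t x => fderiv ℝ ψ (x, t) (0, 1)) mu2 :=
    integrableK hψ hcs (0,1)
  rw [mu2] at hint ⊢
  rw [← integral_integral hint, integral_integral_swap hint]
  rw [show (∫ x in Ioi (0:ℝ), ∫ t in Ioi (0:ℝ), fderiv ℝ ψ (x, t) (0, 1))
      = ∫ x in Ioi (0:ℝ), -ψ (x, 0) from
    setIntegral_congr_fun measurableSet_Ioi fun x _ => ftc_snd hψ hcs x]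
  exact integral_neg _

/-- constant state, space-derivative part -/
theorem int_fst_part (hψ : ContDiff ℝ (⊤ : ℕ∞) ψ) (hcs : HasCompactSupport ψ)
    (hsupp : tsupport ψ ⊆ {p : ℝ × ℝ | 0 < p.1}) :
    ∫ p, fderiv ℝ ψ (p.2, p.1) (1, 0) ∂mu2 = 0 := by
  have hint : Integrable (Function.uncurry fun t x => fderiv ℝ ψ (x, t) (1, 0)) mu2 :=
    integrableK hψ hcs (1,0)
  rw [mu2] at hint ⊢
  rw [← integral_integral hint]
  have : ∀ t : ℝ, (∫ x in Ioi (0:ℝ), fderiv ℝ ψ (x, t) (1, 0)) = 0 := by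
    intro t
    have h0 : ψ (0, t) = 0 :=
      image_eq_zero_of_notMem_tsupport (fun h => lt_irrefl (0:ℝ) (hsupp h))
    rw [ftc_fst hψ hcs t 0, h0, neg_zero]
  simp only [this, integral_zero]

/-- the outgoing wave with speed `lam > 0`: full weak-form contribution -/
theorem wave_part (hψ : ContDiff ℝ (⊤ : ℕ∞) ψ) (hcs : HasCompactSupport ψ)
    {lam : ℝ} (hl : 0 < lam) :
    ∫ p, (if lam * p.1 < p.2
        then fderiv ℝ ψ (p.2, p.1) (0, 1) + lam * fderiv ℝ ψ (p.2, p.1) (1, 0) else 0) ∂mu2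
      = -∫ x in Ioi (0:ℝ), ψ (x, 0) := by
  classical
  set q : ℝ → ℝ := fun x => ψ (x, x / lam) with hq_def
  have hq_int : Integrable q volume :=
    (hψ.continuous.comp (continuous_id.prodMk (continuous_id.div_const lam)))
      |>.integrable_of_hasCompactSupport (graph_cs hcs _)
  have h0_int : Integrable (fun x => ψ (x, 0)) volume :=
    (hψ.continuous.comp (continuous_id.prodMk continuous_const))
      |>.integrable_of_hasCompactSupport (graph_cs hcs _)
  have hS : MeasurableSet {p : ℝ × ℝ | lam * p.1 < p.2} :=
    measurableSet_lt (measurable_fst.const_mul lam) measurable_snd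
  set fT : ℝ × ℝ → ℝ :=
    fun p => if lam * p.1 < p.2 then fderiv ℝ ψ (p.2, p.1) (0, 1) else 0 with hfT_def
  set fX : ℝ × ℝ → ℝ :=
    fun p => if lam * p.1 < p.2 then lam * fderiv ℝ ψ (p.2, p.1) (1, 0) else 0 with hfX_def
  have hfT_ind : fT = ({p : ℝ × ℝ | lam * p.1 < p.2}).indicator
      (fun p => fderiv ℝ ψ (p.2, p.1) (0, 1)) := by
    funext p; by_cases h : lam * p.1 < p.2 <;> simp [hfT_def, Set.indicator_apply, h]
  have hfX_ind : fX = ({p : ℝ × ℝ | lam * p.1 < p.2}).indicator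
      (fun p => lam * fderiv ℝ ψ (p.2, p.1) (1, 0)) := by
    funext p; by_cases h : lam * p.1 < p.2 <;> simp [hfX_def, Set.indicator_apply, h]
  have hIT : Integrable fT mu2 := by
    rw [hfT_ind]; exact (integrableK hψ hcs (0,1)).indicator hS
  have hIX : Integrable fX mu2 := by
    rw [hfX_ind]; exact ((integrableK hψ hcs (1,0)).const_mul lam).indicator hS
  have hsplit : (fun p : ℝ × ℝ => if lam * p.1 < p.2
        then fderiv ℝ ψ (p.2, p.1) (0, 1) + lam * fderiv ℝ ψ (p.2, p.1) (1, 0) else 0)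
      = fun p => fT p + fX p := by
    funext p; by_cases h : lam * p.1 < p.2 <;> simp [hfT_def, hfX_def, h]
  rw [hsplit, integral_add hIT hIX]
  -- T part
  have hT : ∫ p, fT p ∂mu2 = (∫ x in Ioi (0:ℝ), q x) - ∫ x in Ioi (0:ℝ), ψ (x, 0) := by
    have hunc : Integrable (Function.uncurry fun t x => fT (t, x)) mu2 := hIT
    rw [mu2] at hunc
    rw [show ∫ p, fT p ∂mu2 = ∫ p, (fun t x => fT (t, x)) p.1 p.2
        ∂((volume.restrict (Ioi 0)).prod (volume.restrict (Ioi 0))) from rfl]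
    rw [← integral_integral hunc, integral_integral_swap hunc]
    rw [show (∫ x in Ioi (0:ℝ), ∫ t in Ioi (0:ℝ), fT (t, x))
        = ∫ x in Ioi (0:ℝ), (q x - ψ (x, 0)) from ?_]
    · exact integral_sub hq_int.integrableOn h0_int.integrableOn
    refine setIntegral_congr_fun measurableSet_Ioi (fun x hx => ?_)
    have hx0 : (0:ℝ) < x := hx
    have hcond : ∀ t : ℝ, fT (t, x) = (Iio (x / lam)).indicator
        (fun t => fderiv ℝ ψ (x, t) (0, 1)) t := by
      intro t
      have hiff : lam * t < x ↔ t < x / lam := by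
        rw [lt_div_iff₀ hl, mul_comm]
      by_cases h : t < x / lam
      · simp [hfT_def, Set.indicator_apply, h, hiff]
      · simp [hfT_def, Set.indicator_apply, h, hiff]
    calc ∫ t in Ioi (0:ℝ), fT (t, x)
        = ∫ t in Ioi (0:ℝ), (Iio (x / lam)).indicator
            (fun t => fderiv ℝ ψ (x, t) (0, 1)) t :=
          setIntegral_congr_fun measurableSet_Ioi (fun t _ => hcond t)
      _ = ∫ t in Ioi 0 ∩ Iio (x / lam), fderiv ℝ ψ (x, t) (0, 1) :=
          setIntegral_indicator measurableSet_Iio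
      _ = ∫ t in Ioo (0:ℝ) (x / lam), fderiv ℝ ψ (x, t) (0, 1) := by rw [Ioi_inter_Iio]
      _ = ψ (x, x / lam) - ψ (x, 0) := ftc_snd_Ioo hψ x _ (div_nonneg hx0.le hl.le)
      _ = q x - ψ (x, 0) := rfl
  -- X part
  have hX : ∫ p, fX p ∂mu2 = -(∫ x in Ioi (0:ℝ), q x) := by
    have hunc : Integrable (Function.uncurry fun t x => fX (t, x)) mu2 := hIX
    rw [mu2] at hunc
    rw [show ∫ p, fX p ∂mu2 = ∫ p, (fun t x => fX (t, x)) p.1 p.2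
        ∂((volume.restrict (Ioi 0)).prod (volume.restrict (Ioi 0))) from rfl]
    rw [← integral_integral hunc]
    have hinner : ∀ t ∈ Ioi (0:ℝ), (∫ x in Ioi (0:ℝ), fX (t, x))
        = -(lam * q (lam * t)) := by
      intro t ht
      have ht0 : (0:ℝ) < t := ht
      have hcond : ∀ x : ℝ, fX (t, x) = (Ioi (lam * t)).indicator
          (fun x => lam * fderiv ℝ ψ (x, t) (1, 0)) x := by
        intro x
        by_cases h : lam * t < x
        · simp [hfX_def, Set.indicator_apply, h]
        · simp [hfX_def, Set.indicator_apply, h]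
      have hqval : q (lam * t) = ψ (lam * t, t) := by
        rw [hq_def]; simp only [mul_div_cancel_left₀ t hl.ne']
      calc ∫ x in Ioi (0:ℝ), fX (t, x)
          = ∫ x in Ioi (0:ℝ), (Ioi (lam * t)).indicator
              (fun x => lam * fderiv ℝ ψ (x, t) (1, 0)) x :=
            setIntegral_congr_fun measurableSet_Ioi (fun x _ => hcond x)
        _ = ∫ x in Ioi 0 ∩ Ioi (lam * t), lam * fderiv ℝ ψ (x, t) (1, 0) :=
            setIntegral_indicator measurableSet_Ioi
        _ = ∫ x in Ioi (lam * t), lam * fderiv ℝ ψ (x, t) (1, 0) := by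
            rw [Ioi_inter_Ioi, max_eq_right (by positivity)]
        _ = lam * ∫ x in Ioi (lam * t), fderiv ℝ ψ (x, t) (1, 0) := integral_const_mul _ _
        _ = lam * (-ψ (lam * t, t)) := by rw [ftc_fst hψ hcs t (lam * t)]
        _ = -(lam * q (lam * t)) := by rw [hqval]; ring
    calc ∫ t in Ioi (0:ℝ), ∫ x in Ioi (0:ℝ), fX (t, x)
        = ∫ t in Ioi (0:ℝ), -(lam * q (lam * t)) :=
          setIntegral_congr_fun measurableSet_Ioi hinner
      _ = -(lam * ∫ t in Ioi (0:ℝ), q (lam * t)) := by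
          rw [integral_neg, integral_const_mul]
      _ = -(lam * (lam⁻¹ • ∫ x in Ioi (lam * 0), q x)) := by
          rw [integral_comp_mul_left_Ioi q 0 hl]
      _ = -(∫ x in Ioi (0:ℝ), q x) := by
          rw [mul_zero, smul_eq_mul, ← mul_assoc, mul_inv_cancel₀ hl.ne', one_mul]
  rw [hT, hX]; ring

/-- the dot product with `v` as a continuous linear map -/
noncomputable def dotCLM {m : ℕ} (v : Fin m → ℝ) : (Fin m → ℝ) →L[ℝ] ℝ :=
  LinearMap.toContinuousLinearMap
    { toFun := fun u => v ⬝ᵥ u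
      map_add' := fun a b => dotProduct_add v a b
      map_smul' := fun c a => by simp [dotProduct_smul] }

@[simp] theorem dotCLM_apply {m : ℕ} (v u : Fin m → ℝ) : dotCLM v u = v ⬝ᵥ u := rfl

/-- scalar test function obtained by pairing a vector test function with a fixed vector -/
def psiv {m : ℕ} (φ : ℝ → ℝ → Fin m → ℝ) (v : Fin m → ℝ) : ℝ × ℝ → ℝ :=
  fun p => v ⬝ᵥ φ p.1 p.2

theorem sum_dotProduct' {m : ℕ} {ι : Type*} (s : Finset ι) (f : ι → Fin m → ℝ)
    (w : Fin m → ℝ) : (∑ i ∈ s, f i) ⬝ᵥ w = ∑ i ∈ s, f i ⬝ᵥ w := by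
  simp only [dotProduct, Finset.sum_apply, Finset.sum_mul]
  exact Finset.sum_comm

theorem dot_deriv_snd {m : ℕ} {φ : ℝ → ℝ → Fin m → ℝ}
    (hφ : ContDiff ℝ (⊤ : ℕ∞) (fun p : ℝ × ℝ => φ p.1 p.2)) (v : Fin m → ℝ) (x t : ℝ) :
    v ⬝ᵥ deriv (fun s => φ x s) t = fderiv ℝ (psiv φ v) (x, t) (0, 1) := by
  have hΦ : HasDerivAt (fun s => φ x s)
      (fderiv ℝ (fun p : ℝ × ℝ => φ p.1 p.2) (x, t) (0, 1)) t :=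
    ((hφ.differentiable (by simp) (x, t)).hasFDerivAt).comp_hasDerivAt t
      (HasDerivAt.prodMk (hasDerivAt_const t x) (hasDerivAt_id t))
  have h2 : HasDerivAt (fun s => psiv φ v (x, s))
      (dotCLM v (fderiv ℝ (fun p : ℝ × ℝ => φ p.1 p.2) (x, t) (0, 1))) t :=
    (dotCLM v).hasFDerivAt.comp_hasDerivAt t hΦ
  have h3 : HasDerivAt (fun s => psiv φ v (x, s)) (fderiv ℝ (psiv φ v) (x, t) (0, 1)) t :=
    hasDerivAt_snd' ((dotCLM v).contDiff.comp hφ) x t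
  rw [hΦ.deriv, ← dotCLM_apply]
  exact h2.unique h3

theorem dot_deriv_fst {m : ℕ} {φ : ℝ → ℝ → Fin m → ℝ}
    (hφ : ContDiff ℝ (⊤ : ℕ∞) (fun p : ℝ × ℝ => φ p.1 p.2)) (v : Fin m → ℝ) (x t : ℝ) :
    v ⬝ᵥ deriv (fun y => φ y t) x = fderiv ℝ (psiv φ v) (x, t) (1, 0) := by
  have hΦ : HasDerivAt (fun y => φ y t)
      (fderiv ℝ (fun p : ℝ × ℝ => φ p.1 p.2) (x, t) (1, 0)) x := by
    have h := ((hφ.differentiable (by simp) ((x, t) : ℝ × ℝ)).hasFDerivAt).comp_hasDerivAt x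
      (HasDerivAt.prodMk (hasDerivAt_id x) (hasDerivAt_const x t))
    exact h
  have h2 : HasDerivAt (fun y => psiv φ v (y, t))
      (dotCLM v (fderiv ℝ (fun p : ℝ × ℝ => φ p.1 p.2) (x, t) (1, 0))) x :=
    (dotCLM v).hasFDerivAt.comp_hasDerivAt x hΦ
  have h3 : HasDerivAt (fun y => psiv φ v (y, t)) (fderiv ℝ (psiv φ v) (x, t) (1, 0)) x := by
    have := ((dotCLM v).contDiff.comp hφ : ContDiff ℝ (⊤ : ℕ∞) (psiv φ v))
    exact ((this.differentiable (by simp) ((x, t) : ℝ × ℝ)).hasFDerivAt).comp_hasDerivAt x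
      (HasDerivAt.prodMk (hasDerivAt_id x) (hasDerivAt_const x t))
  rw [hΦ.deriv, ← dotCLM_apply]
  exact h2.unique h3

end BRP

/-- Solution of the boundary Riemann problem for a strictly hyperbolic linear system
`U_t + A U_x = 0` on the quarter plane: the coefficients `α` in the basis
`{R̃₁, …, R̃_k, R_{k+1}, …, R_m}` exist and are unique, and the piecewise constant
function built from the outgoing waves is a distributional solution whose boundary
trace `Ū` satisfies `U_l - Ū ∈ span{R̃₁, …, R̃_k}`. -/
theorem boundary_riemann_problem_linear_solution (m k : ℕ)
    (hk1 : 1 ≤ k) (hkm : k < m)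
    (A : Matrix (Fin m) (Fin m) ℝ)
    -- distinct real nonzero eigenvalues `λ₁ < … < λ_k < 0 < λ_{k+1} < … < λ_m`
    (lam : Fin m → ℝ) (hlam : StrictMono lam)
    (hneg : ∀ i : Fin m, (i : ℕ) < k → lam i < 0)
    (hpos : ∀ i : Fin m, k ≤ (i : ℕ) → 0 < lam i)
    -- eigenvectors
    (R : Fin m → (Fin m → ℝ))
    (heig : ∀ i, A.mulVec (R i) = lam i • R i)
    -- the admissible boundary-layer directions `R̃₁, …, R̃_k`, such that
    -- `{R̃₁, …, R̃_k, R_{k+1}, …, R_m}` is a basis of `ℝ^m`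
    (Rt : Fin m → (Fin m → ℝ))
    (Rmix : Fin m → (Fin m → ℝ))
    (hRmix : ∀ i : Fin m, Rmix i = if (i : ℕ) < k then Rt i else R i)
    (hbasis : LinearIndependent ℝ Rmix)
    -- boundary datum and initial datum
    (Ul U0 : Fin m → ℝ) :
    -- existence and uniqueness of the coefficients
    (∃! α : Fin m → ℝ, Ul + ∑ i, α i • Rmix i = U0) ∧
    -- properties of the resulting piecewise constant solution
    (∀ α : Fin m → ℝ, Ul + ∑ i, α i • Rmix i = U0 →
      ∀ Ubar : Fin m → ℝ,
        Ubar = Ul + ∑ i ∈ Finset.univ.filter (fun i : Fin m => (i : ℕ) < k), α i • Rt i →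
      ∀ Usol : ℝ → ℝ → (Fin m → ℝ),
        (∀ x t, Usol x t = Ubar +
          ∑ i ∈ Finset.univ.filter (fun i : Fin m => k ≤ (i : ℕ) ∧ lam i * t < x),
            α i • R i) →
        -- (a) weak (distributional) formulation on the quarter plane, for test
        -- functions compactly supported in `(0,∞) × [0,∞)`
        ((∀ φ : ℝ → ℝ → (Fin m → ℝ),
            ContDiff ℝ (⊤ : ℕ∞) (fun p : ℝ × ℝ => φ p.1 p.2) →
            HasCompactSupport (fun p : ℝ × ℝ => φ p.1 p.2) →
            tsupport (fun p : ℝ × ℝ => φ p.1 p.2) ⊆ {p : ℝ × ℝ | 0 < p.1} →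
            (∫ t in Set.Ioi (0 : ℝ), ∫ x in Set.Ioi (0 : ℝ),
                (Usol x t ⬝ᵥ deriv (fun s => φ x s) t
                  + A.mulVec (Usol x t) ⬝ᵥ deriv (fun y => φ y t) x))
              + (∫ x in Set.Ioi (0 : ℝ), U0 ⬝ᵥ φ x 0) = 0)
        -- (b) boundary trace and admissibility of the boundary layer direction
        ∧ (∀ t : ℝ, 0 < t →
            Filter.Tendsto (fun x => Usol x t) (nhdsWithin 0 (Set.Ioi 0)) (nhds Ubar))
        ∧ Ul - Ubar ∈ Submodule.span ℝ (Rt '' {i : Fin m | (i : ℕ) < k}))) := by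
  classical
  haveI : Nonempty (Fin m) := ⟨⟨0, lt_of_le_of_lt (Nat.zero_le k) hkm⟩⟩
  constructor
  · -- existence and uniqueness of the coefficients
    have hcard : Fintype.card (Fin m) = Module.finrank ℝ (Fin m → ℝ) := by simp
    let b : Module.Basis (Fin m) ℝ (Fin m → ℝ) := basisOfLinearIndependentOfCardEqFinrank hbasis hcard
    have hb : ⇑b = Rmix := coe_basisOfLinearIndependentOfCardEqFinrank hbasis hcard
    have hrep : ∑ i, b.repr (U0 - Ul) i • Rmix i = U0 - Ul := by
      conv_rhs => rw [← b.sum_repr (U0 - Ul)]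
      simp [hb]
    refine ⟨fun i => b.repr (U0 - Ul) i, ?_, ?_⟩
    · show Ul + ∑ i, b.repr (U0 - Ul) i • Rmix i = U0
      rw [hrep]; abel
    · intro β hβ
      have hβ' : ∑ i, β i • Rmix i = U0 - Ul := by rw [← hβ]; abel
      have hzero : ∑ i, (β i - b.repr (U0 - Ul) i) • Rmix i = 0 := by
        simp only [sub_smul, Finset.sum_sub_distrib, hrep, hβ', sub_self]
      have hall := Fintype.linearIndependent_iff.mp hbasis _ hzero
      funext i
      have hi := hall i
      simpa [sub_eq_zero] using hi
  · intro α hα Ubar hUbar Usol hUsol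
    -- decomposition of the initial state
    have hU0dec : U0 = Ubar
        + ∑ i ∈ Finset.univ.filter (fun i : Fin m => ¬ (i : ℕ) < k), α i • R i := by
      have hsplit := Finset.sum_filter_add_sum_filter_not Finset.univ
        (fun i : Fin m => (i : ℕ) < k) (fun i => α i • Rmix i)
      have h1 : ∑ i ∈ Finset.univ.filter (fun i : Fin m => (i : ℕ) < k), α i • Rmix i
          = ∑ i ∈ Finset.univ.filter (fun i : Fin m => (i : ℕ) < k), α i • Rt i :=
        Finset.sum_congr rfl fun i hi => by rw [hRmix i, if_pos (Finset.mem_filter.mp hi).2]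
      have h2 : ∑ i ∈ Finset.univ.filter (fun i : Fin m => ¬ (i : ℕ) < k), α i • Rmix i
          = ∑ i ∈ Finset.univ.filter (fun i : Fin m => ¬ (i : ℕ) < k), α i • R i :=
        Finset.sum_congr rfl fun i hi => by rw [hRmix i, if_neg (Finset.mem_filter.mp hi).2]
      rw [hUbar, ← h1, ← h2, add_assoc, hsplit, hα]
    refine ⟨?_, ?_, ?_⟩
    · -- (a) weak formulation
      intro φ hφ hcsφ hsuppφ
      have hψc : ∀ v : Fin m → ℝ, ContDiff ℝ (⊤ : ℕ∞) (BRP.psiv φ v) :=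
        fun v => (BRP.dotCLM v).contDiff.comp hφ
      have hψcs : ∀ v : Fin m → ℝ, HasCompactSupport (BRP.psiv φ v) := fun v =>
        hcsφ.comp_left (g := fun u : Fin m → ℝ => v ⬝ᵥ u) (dotProduct_zero v)
      have hψsupp : ∀ v : Fin m → ℝ, tsupport (BRP.psiv φ v) ⊆ {p : ℝ × ℝ | 0 < p.1} :=
        fun v => le_trans (closure_mono
          (Function.support_comp_subset (dotProduct_zero v) _)) hsuppφ
      set g0 : ℝ × ℝ → ℝ := fun p =>
        fderiv ℝ (BRP.psiv φ Ubar) (p.2, p.1) (0, 1)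
          + fderiv ℝ (BRP.psiv φ (A.mulVec Ubar)) (p.2, p.1) (1, 0) with hg0def
      set gg : Fin m → ℝ × ℝ → ℝ := fun i p =>
        if k ≤ (i : ℕ) ∧ lam i * p.1 < p.2
        then α i * (fderiv ℝ (BRP.psiv φ (R i)) (p.2, p.1) (0, 1)
            + lam i * fderiv ℝ (BRP.psiv φ (R i)) (p.2, p.1) (1, 0))
        else 0 with hggdef
      -- pointwise decomposition of the integrand
      have hpt : ∀ x t : ℝ,
          Usol x t ⬝ᵥ deriv (fun s => φ x s) t
            + A.mulVec (Usol x t) ⬝ᵥ deriv (fun y => φ y t) x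
          = g0 (t, x) + ∑ i, gg i (t, x) := by
        intro x t
        have h1 : Usol x t ⬝ᵥ deriv (fun s => φ x s) t
            = Ubar ⬝ᵥ deriv (fun s => φ x s) t
              + ∑ i ∈ Finset.univ.filter (fun i : Fin m => k ≤ (i : ℕ) ∧ lam i * t < x),
                  α i * (R i ⬝ᵥ deriv (fun s => φ x s) t) := by
          rw [hUsol x t, add_dotProduct, BRP.sum_dotProduct']
          congr 1
          exact Finset.sum_congr rfl fun i _ => by rw [smul_dotProduct, smul_eq_mul]
        have hmv : A.mulVec (∑ i ∈ Finset.univ.filter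
              (fun i : Fin m => k ≤ (i : ℕ) ∧ lam i * t < x), α i • R i)
            = ∑ i ∈ Finset.univ.filter
              (fun i : Fin m => k ≤ (i : ℕ) ∧ lam i * t < x), (α i * lam i) • R i := by
          rw [← Matrix.mulVecLin_apply, map_sum]
          refine Finset.sum_congr rfl fun i _ => ?_
          rw [_root_.map_smul, Matrix.mulVecLin_apply, heig i, smul_smul]
        have h2 : A.mulVec (Usol x t) ⬝ᵥ deriv (fun y => φ y t) x
            = A.mulVec Ubar ⬝ᵥ deriv (fun y => φ y t) x
              + ∑ i ∈ Finset.univ.filter (fun i : Fin m => k ≤ (i : ℕ) ∧ lam i * t < x),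
                  (α i * lam i) * (R i ⬝ᵥ deriv (fun y => φ y t) x) := by
          rw [hUsol x t, Matrix.mulVec_add, hmv, add_dotProduct, BRP.sum_dotProduct']
          congr 1
          exact Finset.sum_congr rfl fun i _ => by rw [smul_dotProduct, smul_eq_mul]
        have h3 : ∑ i, gg i (t, x)
            = ∑ i ∈ Finset.univ.filter (fun i : Fin m => k ≤ (i : ℕ) ∧ lam i * t < x),
                (α i * (R i ⬝ᵥ deriv (fun s => φ x s) t)
                  + (α i * lam i) * (R i ⬝ᵥ deriv (fun y => φ y t) x)) := by
          rw [Finset.sum_filter]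
          refine Finset.sum_congr rfl fun i _ => ?_
          simp only [hggdef]
          by_cases h : k ≤ (i : ℕ) ∧ lam i * t < x
          · rw [if_pos h, if_pos h, BRP.dot_deriv_snd hφ (R i) x t,
              BRP.dot_deriv_fst hφ (R i) x t]
            ring
          · rw [if_neg h, if_neg h]
        rw [h1, h2, h3, hg0def]
        rw [BRP.dot_deriv_snd hφ Ubar x t, BRP.dot_deriv_fst hφ (A.mulVec Ubar) x t,
          Finset.sum_add_distrib]
        ring
      -- integrability
      have hg0int : Integrable g0 BRP.mu2 := by
        rw [hg0def]
        exact (BRP.integrableK (hψc Ubar) (hψcs Ubar) (0, 1)).add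
          (BRP.integrableK (hψc (A.mulVec Ubar)) (hψcs (A.mulVec Ubar)) (1, 0))
      have hggint : ∀ i : Fin m, Integrable (gg i) BRP.mu2 := by
        intro i
        by_cases hik : k ≤ (i : ℕ)
        · have hSi : MeasurableSet {p : ℝ × ℝ | lam i * p.1 < p.2} :=
            measurableSet_lt (measurable_fst.const_mul _) measurable_snd
          have heq : gg i = ({p : ℝ × ℝ | lam i * p.1 < p.2}).indicator
              (fun p => α i * (fderiv ℝ (BRP.psiv φ (R i)) (p.2, p.1) (0, 1)
                + lam i * fderiv ℝ (BRP.psiv φ (R i)) (p.2, p.1) (1, 0))) := by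
            funext p
            by_cases h : lam i * p.1 < p.2 <;>
              simp [hggdef, Set.indicator_apply, h, hik]
          rw [heq]
          exact (((BRP.integrableK (hψc (R i)) (hψcs (R i)) (0, 1)).add
            ((BRP.integrableK (hψc (R i)) (hψcs (R i)) (1, 0)).const_mul
              (lam i))).const_mul (α i)).indicator hSi
        · have heq : gg i = fun _ => 0 := by
            funext p; simp [hggdef, hik]
          rw [heq]
          exact integrable_zero _ _ _
      have hsumint : Integrable (fun p => g0 p + ∑ i, gg i p) BRP.mu2 :=
        hg0int.add (integrable_finset_sum _ fun i _ => hggint i)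
      -- double integral via the product measure
      have hDI : (∫ t in Set.Ioi (0 : ℝ), ∫ x in Set.Ioi (0 : ℝ),
            (Usol x t ⬝ᵥ deriv (fun s => φ x s) t
              + A.mulVec (Usol x t) ⬝ᵥ deriv (fun y => φ y t) x))
          = ∫ p, (g0 p + ∑ i, gg i p) ∂BRP.mu2 := by
        have hunc : Integrable
            (Function.uncurry fun t x => g0 (t, x) + ∑ i, gg i (t, x)) BRP.mu2 := hsumint
        rw [BRP.mu2] at hunc
        calc (∫ t in Set.Ioi (0 : ℝ), ∫ x in Set.Ioi (0 : ℝ),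
              (Usol x t ⬝ᵥ deriv (fun s => φ x s) t
                + A.mulVec (Usol x t) ⬝ᵥ deriv (fun y => φ y t) x))
            = ∫ t in Set.Ioi (0 : ℝ), ∫ x in Set.Ioi (0 : ℝ),
                (g0 (t, x) + ∑ i, gg i (t, x)) := by
              refine setIntegral_congr_fun measurableSet_Ioi (fun t _ => ?_)
              exact setIntegral_congr_fun measurableSet_Ioi (fun x _ => hpt x t)
          _ = ∫ p, (g0 p + ∑ i, gg i p) ∂BRP.mu2 := by
              rw [BRP.mu2]
              exact integral_integral hunc
      -- evaluation of the product integrals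
      have hDI2 : ∫ p, (g0 p + ∑ i, gg i p) ∂BRP.mu2
          = (-∫ x in Set.Ioi (0 : ℝ), BRP.psiv φ Ubar (x, 0))
            + ∑ i : Fin m, (if k ≤ (i : ℕ)
                then -(α i * ∫ x in Set.Ioi (0 : ℝ), BRP.psiv φ (R i) (x, 0)) else 0) := by
        rw [integral_add hg0int (integrable_finset_sum _ fun i _ => hggint i),
          integral_finset_sum _ fun i _ => hggint i]
        congr 1
        · rw [hg0def]
          rw [integral_add (BRP.integrableK (hψc Ubar) (hψcs Ubar) (0, 1))
            (BRP.integrableK (hψc (A.mulVec Ubar)) (hψcs (A.mulVec Ubar)) (1, 0))]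
          rw [BRP.int_snd_part (hψc Ubar) (hψcs Ubar),
            BRP.int_fst_part (hψc (A.mulVec Ubar)) (hψcs (A.mulVec Ubar))
              (hψsupp (A.mulVec Ubar)), add_zero]
        · refine Finset.sum_congr rfl fun i _ => ?_
          by_cases hik : k ≤ (i : ℕ)
          · rw [if_pos hik]
            have heq : gg i = fun p => α i * (if lam i * p.1 < p.2
                then fderiv ℝ (BRP.psiv φ (R i)) (p.2, p.1) (0, 1)
                  + lam i * fderiv ℝ (BRP.psiv φ (R i)) (p.2, p.1) (1, 0) else 0) := by
              funext p
              by_cases h : lam i * p.1 < p.2 <;> simp [hggdef, h, hik]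
            rw [heq, integral_const_mul,
              BRP.wave_part (hψc (R i)) (hψcs (R i)) (hpos i hik)]
            ring
          · rw [if_neg hik]
            have heq : gg i = fun _ => 0 := by funext p; simp [hggdef, hik]
            rw [heq]
            simp
      -- the boundary term
      have hBT : (∫ x in Set.Ioi (0 : ℝ), U0 ⬝ᵥ φ x 0)
          = (∫ x in Set.Ioi (0 : ℝ), BRP.psiv φ Ubar (x, 0))
            + ∑ i ∈ Finset.univ.filter (fun i : Fin m => ¬ (i : ℕ) < k),
                α i * ∫ x in Set.Ioi (0 : ℝ), BRP.psiv φ (R i) (x, 0) := by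
        have hint0 : ∀ v : Fin m → ℝ,
            IntegrableOn (fun x => BRP.psiv φ v (x, 0)) (Set.Ioi 0) := fun v =>
          (((hψc v).continuous.comp
              (continuous_id.prodMk continuous_const)).integrable_of_hasCompactSupport
            (BRP.graph_cs (hψcs v) _)).integrableOn
        have hptb : ∀ x : ℝ, U0 ⬝ᵥ φ x 0 = BRP.psiv φ Ubar (x, 0)
            + ∑ i ∈ Finset.univ.filter (fun i : Fin m => ¬ (i : ℕ) < k),
                α i * BRP.psiv φ (R i) (x, 0) := by
          intro x
          rw [show U0 ⬝ᵥ φ x 0 = (Ubar + ∑ i ∈ Finset.univ.filter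
                (fun i : Fin m => ¬ (i : ℕ) < k), α i • R i) ⬝ᵥ φ x 0 from by rw [← hU0dec],
            add_dotProduct, BRP.sum_dotProduct']
          congr 1
          exact Finset.sum_congr rfl fun i _ => by rw [smul_dotProduct, smul_eq_mul]; rfl
        calc (∫ x in Set.Ioi (0 : ℝ), U0 ⬝ᵥ φ x 0)
            = ∫ x in Set.Ioi (0 : ℝ), (BRP.psiv φ Ubar (x, 0)
                + ∑ i ∈ Finset.univ.filter (fun i : Fin m => ¬ (i : ℕ) < k),
                    α i * BRP.psiv φ (R i) (x, 0)) :=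
              setIntegral_congr_fun measurableSet_Ioi (fun x _ => hptb x)
          _ = _ := by
              rw [integral_add (hint0 Ubar) (integrable_finset_sum _ fun i _ =>
                (hint0 (R i)).const_mul (α i)),
                integral_finset_sum _ fun i _ => (hint0 (R i)).const_mul (α i)]
              congr 1
              exact Finset.sum_congr rfl fun i _ => integral_const_mul _ _
      -- assemble
      rw [hDI, hDI2, hBT]
      have hWsum : (∑ i : Fin m, (if k ≤ (i : ℕ)
            then -(α i * ∫ x in Set.Ioi (0 : ℝ), BRP.psiv φ (R i) (x, 0)) else 0))
          = -∑ i ∈ Finset.univ.filter (fun i : Fin m => ¬ (i : ℕ) < k),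
              α i * ∫ x in Set.Ioi (0 : ℝ), BRP.psiv φ (R i) (x, 0) := by
        rw [← Finset.sum_filter, ← Finset.sum_neg_distrib]
        apply Finset.sum_congr _ fun i _ => rfl
        refine Finset.filter_congr fun i _ => ?_
        simp [not_lt]
      rw [hWsum]
      ring
    · -- (b) boundary trace
      intro t ht
      have hc0 : 0 < lam ⟨k, hkm⟩ * t := mul_pos (hpos ⟨k, hkm⟩ (le_refl k)) ht
      refine Filter.Tendsto.congr' ?_ tendsto_const_nhds
      filter_upwards [Ioo_mem_nhdsGT_of_mem
        (show (0 : ℝ) ∈ Set.Ico (0 : ℝ) (lam ⟨k, hkm⟩ * t) from ⟨le_refl 0, hc0⟩)] with x hx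
      have hempty : Finset.univ.filter (fun i : Fin m => k ≤ (i : ℕ) ∧ lam i * t < x) = ∅ := by
        refine Finset.filter_eq_empty_iff.mpr (fun i _ => ?_)
        rintro ⟨hik, hlt⟩
        have hle : lam ⟨k, hkm⟩ ≤ lam i := hlam.monotone (Fin.le_def.mpr hik)
        have h1 : lam ⟨k, hkm⟩ * t ≤ lam i * t := mul_le_mul_of_nonneg_right hle ht.le
        exact absurd (lt_of_le_of_lt h1 hlt) (not_lt.mpr hx.2.le)
      rw [hUsol x t, hempty, Finset.sum_empty, add_zero]
    · -- boundary-layer direction admissibility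
      have hdiff : Ul - Ubar
          = -∑ i ∈ Finset.univ.filter (fun i : Fin m => (i : ℕ) < k), α i • Rt i := by
        rw [hUbar]; abel
      rw [hdiff]
      refine neg_mem (Submodule.sum_mem _ fun i hi =>
        Submodule.smul_mem _ _ (Submodule.subset_span ?_))
      exact ⟨i, (Finset.mem_filter.mp hi).2, rfl⟩
end

section
/- Define U = (h,u): (-1,∞) × (0,∞) → ℝ² by (h,u)(x,t) = (5/2, 1 - √2/4) for 0 < x+1 < (1+√2)t; (h,u)(x,t) = (3,1) for x+1 > (1+√2)t and x < (1-√2)t; (h,u)(x,t) = (2, 1 + √2/2) for (1-√2)t < x < (1+√2)t; and (h,u)(x,t) = (1,1) for x > (1+√2)t. Then for all times 0 < t < 1/(2√2): (a) U is a distributional solution of the linearized shallow water system with h̃ = 2, ũ = 1, g = 1 on (-1,∞) × (0, 1/(2√2)) with initial datum (h,u)(x,0) = (3,1) for x < 0 and (1,1) for x > 0, i.e. for every smooth test function φ compactly supported in (-1,∞) × [0, 1/(2√2)), ∫∫ [⟨U, ∂_t φ⟩ + ⟨A U, ∂_x φ⟩] dx dt + ∫ ⟨U_0(x), φ(x,0)⟩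 dx = 0 with A = [[1,2],[1,1]]; (b) the boundary trace Ū = lim_{x→-1⁺} U(x,t) equals (5/2, 1 - √2/4), and the Dirichlet datum U_l = (2,1) satisfies U_l - Ū = -(1/2)·R_1 with R_1 = (1, -√2/2), the eigenvector of A for the negative eigenvalue 1 - √2. -/
open Matrix MeasureTheory Set

lemma key_integrable {α : Type*} [MeasurableSpace α] [TopologicalSpace α] [OpensMeasurableSpace α]
    {μ : Measure α} {a f : α → ℝ} (ha : Measurable a) {C : ℝ} (hC : ∀ s, |a s| ≤ C)
    (hf : Continuous f) (hfc : HasCompactSupport f) (hμ : μ (tsupport f) < ⊤) :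
    Integrable (fun x => a x * f x) μ := by
  obtain ⟨D, hD⟩ := hfc.exists_bound_of_continuous hf
  have hK : MeasurableSet (tsupport f) := (isClosed_tsupport f).measurableSet
  have hb : Integrable ((tsupport f).indicator fun _ => C * D) μ :=
    (integrable_indicator_iff hK).2 (integrableOn_const hμ.ne)
  refine hb.mono' ((ha.mul hf.measurable).aestronglyMeasurable) ?_
  filter_upwards with x
  by_cases hx : x ∈ tsupport f
  · have h1 : |a x| ≤ C := hC x
    have h2 : ‖f x‖ ≤ D := hD x
    simp only [Set.indicator_of_mem hx, norm_mul, Real.norm_eq_abs]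
    exact mul_le_mul h1 (by simpa using h2) (abs_nonneg _) ((abs_nonneg _).trans h1)
  · simp [Set.indicator_of_notMem hx, image_eq_zero_of_notMem_tsupport hx]

lemma fderiv_zero_of_nmem_tsupport {ψ : ℝ × ℝ → ℝ} {p : ℝ × ℝ} (hp : p ∉ tsupport ψ) :
    fderiv ℝ ψ p = 0 := by
  have h : ψ =ᶠ[nhds p] (fun _ => (0 : ℝ)) := by
    filter_upwards [(isClosed_tsupport ψ).isOpen_compl.mem_nhds hp] with q hq
    exact image_eq_zero_of_notMem_tsupport hq
  rw [h.fderiv_eq, fderiv_fun_const]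
  rfl

lemma deriv_form_eq (ψ : ℝ × ℝ → ℝ) (hψ : ContDiff ℝ (⊤ : ℕ∞) ψ) (lam x t : ℝ) :
    deriv (fun s => ψ (x, s)) t + lam * deriv (fun y => ψ (y, t)) x
      = fderiv ℝ ψ (x, t) (lam, 1) := by
  have hd := (hψ.differentiable (by simp) (x, t)).hasFDerivAt
  have h1 : HasDerivAt (fun s : ℝ => ψ (x, s)) (fderiv ℝ ψ (x, t) (0, 1)) t := by
    have hc : HasDerivAt (fun s : ℝ => ((x : ℝ), s)) ((0 : ℝ), (1 : ℝ)) t :=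
      (hasDerivAt_const t x).prodMk (hasDerivAt_id t)
    exact hd.comp_hasDerivAt t hc
  have h2 : HasDerivAt (fun y : ℝ => ψ (y, t)) (fderiv ℝ ψ (x, t) (1, 0)) x := by
    have hc : HasDerivAt (fun y : ℝ => (y, (t : ℝ))) ((1 : ℝ), (0 : ℝ)) x :=
      (hasDerivAt_id x).prodMk (hasDerivAt_const x t)
    exact hd.comp_hasDerivAt x hc
  rw [h1.deriv, h2.deriv]
  have hv : ((lam, 1) : ℝ × ℝ) = lam • ((1 : ℝ), (0 : ℝ)) + ((0 : ℝ), (1 : ℝ)) := by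
    simp [Prod.ext_iff]
  rw [hv, map_add, _root_.map_smul, smul_eq_mul]
  ring

lemma line_hasDerivAt (ψ : ℝ × ℝ → ℝ) (hψ : ContDiff ℝ (⊤ : ℕ∞) ψ) (lam y t : ℝ) :
    HasDerivAt (fun t => ψ (y + lam * t, t)) (fderiv ℝ ψ (y + lam * t, t) (lam, 1)) t := by
  have hd := (hψ.differentiable (by simp) (y + lam * t, t)).hasFDerivAt
  have hc : HasDerivAt (fun t : ℝ => (y + lam * t, t)) ((lam : ℝ), (1 : ℝ)) t := by
    have h1 : HasDerivAt (fun t : ℝ => y + lam * t) lam t := by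
      simpa using ((hasDerivAt_id t).const_mul lam).const_add y
    exact h1.prodMk (hasDerivAt_id t)
  exact HasFDerivAt.comp_hasDerivAt (f := fun t : ℝ => (y + lam * t, t)) t hd hc

lemma dot_deriv (c : Fin 2 → ℝ) (f : ℝ → (Fin 2 → ℝ)) (t : ℝ) (hf : DifferentiableAt ℝ f t) :
    deriv (fun s => c ⬝ᵥ f s) t = c ⬝ᵥ deriv f t := by
  have h := hf.hasDerivAt
  have h2 : ∀ i, HasDerivAt (fun s => f s i) (deriv f t i) t := hasDerivAt_pi.1 h
  have h3 : HasDerivAt (fun s => c ⬝ᵥ f s) (c 0 * deriv f t 0 + c 1 * deriv f t 1) t := by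
    have h4 := ((h2 0).const_mul (c 0)).add ((h2 1).const_mul (c 1))
    have h5 : (fun s => c 0 * f s 0 + c 1 * f s 1) = fun s => c ⬝ᵥ f s := by
      funext s; simp [dotProduct, Fin.sum_univ_two]
    rw [← h5]; exact h4
  rw [h3.deriv]
  simp [dotProduct, Fin.sum_univ_two]

lemma transport (T lam : ℝ) (hT : 0 < T) (g : ℝ → ℝ) (hg : Measurable g)
    (C : ℝ) (hgb : ∀ s, |g s| ≤ C)
    (ψ : ℝ × ℝ → ℝ) (hψ : ContDiff ℝ (⊤ : ℕ∞) ψ) (hcs : HasCompactSupport ψ)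
    (hsupp : tsupport ψ ⊆ {p : ℝ × ℝ | p.2 < T}) :
    Integrable (fun t => ∫ x, g (x - lam * t) *
        (deriv (fun s => ψ (x, s)) t + lam * deriv (fun y => ψ (y, t)) x))
      (volume.restrict (Ioo 0 T))
    ∧ (∫ t in Ioo (0:ℝ) T, ∫ x, g (x - lam * t) *
        (deriv (fun s => ψ (x, s)) t + lam * deriv (fun y => ψ (y, t)) x))
      = - ∫ x, g x * ψ (x, 0) := by
  set Df : ℝ × ℝ → ℝ := fun p => fderiv ℝ ψ p (lam, 1) with hDf
  have hDf_cont : Continuous Df :=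
    (hψ.continuous_fderiv (by simp)).clm_apply continuous_const
  have hDf_zero : ∀ p ∉ tsupport ψ, Df p = 0 := by
    intro p hp
    simp [hDf, fderiv_zero_of_nmem_tsupport hp]
  -- rewrite the integrand using Df
  have hinner : ∀ t : ℝ, (∫ x, g (x - lam * t) *
      (deriv (fun s => ψ (x, s)) t + lam * deriv (fun y => ψ (y, t)) x))
      = ∫ y, g y * Df (y + lam * t, t) := by
    intro t
    have h1 : (fun x => g (x - lam * t) *
        (deriv (fun s => ψ (x, s)) t + lam * deriv (fun y => ψ (y, t)) x))
        = fun x => g (x - lam * t) * Df (x, t) := by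
      funext x; rw [deriv_form_eq ψ hψ lam x t]
    rw [h1]
    have h2 := MeasureTheory.integral_add_right_eq_self
      (μ := (volume : Measure ℝ)) (fun x => g (x - lam * t) * Df (x, t)) (lam * t)
    rw [← h2]
    congr 1
    funext y
    simp [add_sub_cancel_right]
  -- the line map is a continuous bijection with continuous inverse
  have hmap : Continuous fun p : ℝ × ℝ => ((p.2 + lam * p.1 : ℝ), (p.1 : ℝ)) :=
    (continuous_snd.add (continuous_const.mul continuous_fst)).prodMk continuous_fst
  -- compact support of the shifted integrand
  have hFf_cont : Continuous fun p : ℝ × ℝ => Df (p.2 + lam * p.1, p.1) := hDf_cont.comp hmap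
  have hFf_cs : HasCompactSupport fun p : ℝ × ℝ => Df (p.2 + lam * p.1, p.1) := by
    have hS : IsCompact ((fun q : ℝ × ℝ => ((q.2 : ℝ), (q.1 - lam * q.2 : ℝ))) '' tsupport ψ) :=
      hcs.image ((continuous_snd.prodMk (continuous_fst.sub (continuous_const.mul continuous_snd))))
    apply HasCompactSupport.intro hS
    intro p hp
    by_contra h0
    apply hp
    have hmem : (p.2 + lam * p.1, p.1) ∈ tsupport ψ := by
      by_contra hnm
      exact h0 (hDf_zero _ hnm)
    refine ⟨(p.2 + lam * p.1, p.1), hmem, ?_⟩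
    simp only [Prod.ext_iff]
    constructor
    · trivial
    · ring
  set Kt : Set (ℝ × ℝ) := tsupport fun p : ℝ × ℝ => Df (p.2 + lam * p.1, p.1) with hKt
  have hμfin : ((volume.restrict (Ioo (0:ℝ) T)).prod (volume : Measure ℝ)) Kt < ⊤ := by
    have e1 : ((volume.restrict (Ioo (0:ℝ) T)).prod (volume : Measure ℝ)) Kt
        = (((volume : Measure ℝ).prod volume).restrict ((Ioo (0:ℝ) T) ×ˢ univ)) Kt := by
      rw [← Measure.prod_restrict, Measure.restrict_univ]
    have e2 : (((volume : Measure ℝ).prod volume).restrict ((Ioo (0:ℝ) T) ×ˢ univ)) Kt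
        ≤ ((volume : Measure ℝ).prod volume) Kt := Measure.restrict_apply_le _ _
    have e3 : ((volume : Measure ℝ).prod volume) Kt = volume Kt := rfl
    have e4 : volume Kt < ⊤ := hFf_cs.isCompact.measure_lt_top
    rw [e1, e3] at *
    exact lt_of_le_of_lt (e3 ▸ e2) e4
  have hprod : Integrable (fun p : ℝ × ℝ => g p.2 * Df (p.2 + lam * p.1, p.1))
      ((volume.restrict (Ioo (0:ℝ) T)).prod volume) :=
    key_integrable (hg.comp measurable_snd) (fun p => hgb p.2) hFf_cont hFf_cs hμfin
  have hfun : (fun t => ∫ x, g (x - lam * t) *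
        (deriv (fun s => ψ (x, s)) t + lam * deriv (fun y => ψ (y, t)) x))
      = fun t => ∫ y, g y * Df (y + lam * t, t) := funext hinner
  constructor
  · rw [hfun]
    exact hprod.integral_prod_left
  · rw [hfun]
    have hswap : (∫ t in Ioo (0:ℝ) T, ∫ y, g y * Df (y + lam * t, t))
        = ∫ y, ∫ t in Ioo (0:ℝ) T, g y * Df (y + lam * t, t) :=
      integral_integral_swap hprod
    rw [hswap]
    have hptw : ∀ y : ℝ, (∫ t in Ioo (0:ℝ) T, g y * Df (y + lam * t, t))
        = -(g y * ψ (y, 0)) := by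
      intro y
      rw [integral_const_mul]
      have h2 : (∫ t in Ioo (0:ℝ) T, Df (y + lam * t, t)) = ψ (y + lam * T, T) - ψ (y, 0) := by
        rw [← integral_Ioc_eq_integral_Ioo, ← intervalIntegral.integral_of_le hT.le]
        have hcont : Continuous fun t : ℝ => Df (y + lam * t, t) :=
          hDf_cont.comp
            ((continuous_const.add (continuous_const.mul continuous_id)).prodMk continuous_id)
        have := intervalIntegral.integral_eq_sub_of_hasDerivAt (a := 0) (b := T)
          (f := fun t => ψ (y + lam * t, t)) (f' := fun t => Df (y + lam * t, t))
          (fun t _ => line_hasDerivAt ψ hψ lam y t) (hcont.intervalIntegrable 0 T)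
        simpa using this
      rw [h2]
      have h3 : ψ (y + lam * T, T) = 0 := by
        apply image_eq_zero_of_notMem_tsupport
        intro hmem
        exact lt_irrefl T (hsupp hmem)
      rw [h3]
      ring
    rw [show (fun y => ∫ t in Ioo (0:ℝ) T, g y * Df (y + lam * t, t))
        = fun y => -(g y * ψ (y, 0)) from funext hptw]
    exact integral_neg _


lemma inner_integrable (ψ : ℝ × ℝ → ℝ) (hψ : ContDiff ℝ (⊤ : ℕ∞) ψ) (hcs : HasCompactSupport ψ)
    (g : ℝ → ℝ) (hg : Measurable g) {C : ℝ} (hgb : ∀ s, |g s| ≤ C) (lam t : ℝ) :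
    Integrable (fun x => g (x - lam * t) *
      (deriv (fun s => ψ (x, s)) t + lam * deriv (fun y => ψ (y, t)) x)) volume := by
  have h1 : (fun x => g (x - lam * t) *
      (deriv (fun s => ψ (x, s)) t + lam * deriv (fun y => ψ (y, t)) x))
      = fun x => g (x - lam * t) * fderiv ℝ ψ (x, t) (lam, 1) := by
    funext x; rw [deriv_form_eq ψ hψ lam x t]
  rw [h1]
  have hfc : Continuous fun x : ℝ => fderiv ℝ ψ (x, t) (lam, 1) :=
    ((hψ.continuous_fderiv (by simp)).clm_apply continuous_const).comp
      (continuous_id.prodMk continuous_const)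
  have hsupp : HasCompactSupport fun x : ℝ => fderiv ℝ ψ (x, t) (lam, 1) := by
    apply HasCompactSupport.intro (hcs.image continuous_fst)
    intro x hx
    have : (x, t) ∉ tsupport ψ := fun hm => hx ⟨(x, t), hm, rfl⟩
    rw [fderiv_zero_of_nmem_tsupport this]
    rfl
  exact key_integrable (hg.comp (measurable_id.sub measurable_const)) (fun s => hgb _)
    hfc hsupp hsupp.isCompact.measure_lt_top

lemma slice_integrable (ψ : ℝ × ℝ → ℝ) (hψc : Continuous ψ) (hcs : HasCompactSupport ψ)
    (g : ℝ → ℝ) (hg : Measurable g) {C : ℝ} (hgb : ∀ s, |g s| ≤ C) :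
    Integrable (fun x => g x * ψ (x, 0)) volume := by
  have hfc : Continuous fun x : ℝ => ψ (x, 0) := hψc.comp (continuous_id.prodMk continuous_const)
  have hsupp : HasCompactSupport fun x : ℝ => ψ (x, 0) := by
    apply HasCompactSupport.intro (hcs.image continuous_fst)
    intro x hx
    exact image_eq_zero_of_notMem_tsupport fun hm => hx ⟨(x, 0), hm, rfl⟩
  exact key_integrable hg hgb hfc hsupp hsupp.isCompact.measure_lt_top

noncomputable def gOne : ℝ → ℝ := fun s =>
  if s < 0 then (3 - Real.sqrt 2) / 2 else (1 - Real.sqrt 2) / 2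

noncomputable def gTwo : ℝ → ℝ := fun s =>
  if s < -1 then (2 + Real.sqrt 2) / 2
  else if s < 0 then (3 + Real.sqrt 2) / 2 else (1 + Real.sqrt 2) / 2

lemma gOne_measurable : Measurable gOne :=
  Measurable.ite measurableSet_Iio measurable_const measurable_const

lemma gTwo_measurable : Measurable gTwo :=
  Measurable.ite measurableSet_Iio measurable_const
    (Measurable.ite measurableSet_Iio measurable_const measurable_const)

lemma sqrt2_lt_two : Real.sqrt 2 < 2 := by
  nlinarith [Real.mul_self_sqrt (show (0:ℝ) ≤ 2 by norm_num), Real.sqrt_nonneg 2]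

lemma one_lt_sqrt2 : 1 < Real.sqrt 2 := by
  nlinarith [Real.mul_self_sqrt (show (0:ℝ) ≤ 2 by norm_num), Real.sqrt_nonneg 2]

lemma gOne_bound : ∀ s, |gOne s| ≤ 3 := by
  intro s
  unfold gOne
  have h0 := Real.sqrt_nonneg 2
  have h2 := sqrt2_lt_two
  split_ifs <;> rw [abs_le] <;> constructor <;> nlinarith

lemma gTwo_bound : ∀ s, |gTwo s| ≤ 3 := by
  intro s
  unfold gTwo
  have h0 := Real.sqrt_nonneg 2
  have h2 := sqrt2_lt_two
  split_ifs <;> rw [abs_le] <;> constructor <;> nlinarith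
/-- The explicit piecewise constant function is, for times `0 < t < 1/(2√2)`, the
solution of the boundary Riemann problem for the linearized shallow water system
(`h̃ = 2`, `ũ = 1`, `g = 1`, i.e. `A = [[1,2],[1,1]]`) on `(-1,∞)` obtained as the
limit of the uniform (Laplacian) viscosity: (a) it is a distributional solution with
the given initial datum; (b) its boundary trace is `Ū = (5/2, 1 - √2/4)` and the
Dirichlet datum `U_l = (2,1)` satisfies `U_l - Ū = -(1/2)·R₁`, with `R₁ = (1, -√2/2)`
the eigenvector of `A` for the negative eigenvalue `1 - √2`. -/
theorem linearized_shallow_water_laplacian_viscosity_limit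
    (A : Matrix (Fin 2) (Fin 2) ℝ) (hA : A = !![1, 2; 1, 1])
    (T : ℝ) (hT : T = 1 / (2 * Real.sqrt 2))
    -- the piecewise constant candidate solution
    (Usol : ℝ → ℝ → (Fin 2 → ℝ))
    (hUsol : ∀ x t, Usol x t =
      if x + 1 < (1 + Real.sqrt 2) * t then ![5 / 2, 1 - Real.sqrt 2 / 4]
      else if x < (1 - Real.sqrt 2) * t then ![3, 1]
      else if x < (1 + Real.sqrt 2) * t then ![2, 1 + Real.sqrt 2 / 2]
      else ![1, 1])
    -- the initial datum
    (U0 : ℝ → (Fin 2 → ℝ))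
    (hU0 : ∀ x, U0 x = if x < 0 then ![3, 1] else ![1, 1])
    -- boundary trace, Dirichlet datum, eigenvector `R₁`
    (Ubar : Fin 2 → ℝ) (hUbar : Ubar = ![5 / 2, 1 - Real.sqrt 2 / 4])
    (Ul : Fin 2 → ℝ) (hUl : Ul = ![2, 1])
    (R1 : Fin 2 → ℝ) (hR1 : R1 = ![1, -Real.sqrt 2 / 2]) :
    -- (a) distributional solution on `(-1,∞) × (0,T)` for test functions compactly
    -- supported in `(-1,∞) × [0,T)`
    ((∀ φ : ℝ → ℝ → (Fin 2 → ℝ),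
        ContDiff ℝ (⊤ : ℕ∞) (fun p : ℝ × ℝ => φ p.1 p.2) →
        HasCompactSupport (fun p : ℝ × ℝ => φ p.1 p.2) →
        tsupport (fun p : ℝ × ℝ => φ p.1 p.2) ⊆ {p : ℝ × ℝ | -1 < p.1 ∧ p.2 < T} →
        (∫ t in Set.Ioo (0 : ℝ) T, ∫ x in Set.Ioi (-1 : ℝ),
            (Usol x t ⬝ᵥ deriv (fun s => φ x s) t
              + A.mulVec (Usol x t) ⬝ᵥ deriv (fun y => φ y t) x))
          + (∫ x in Set.Ioi (-1 : ℝ), U0 x ⬝ᵥ φ x 0) = 0)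
    -- (b) boundary trace and boundary layer direction
    ∧ (∀ t ∈ Set.Ioo (0 : ℝ) T,
        Filter.Tendsto (fun x => Usol x t) (nhdsWithin (-1) (Set.Ioi (-1))) (nhds Ubar))
    ∧ A.mulVec R1 = (1 - Real.sqrt 2) • R1
    ∧ Ul - Ubar = (-(1 / 2) : ℝ) • R1) := by
  have hs : Real.sqrt 2 * Real.sqrt 2 = 2 := Real.mul_self_sqrt (by norm_num)
  have hs1 : 1 < Real.sqrt 2 := one_lt_sqrt2
  have hs2 : Real.sqrt 2 < 2 := sqrt2_lt_two
  have hspos : (0:ℝ) < Real.sqrt 2 := lt_trans one_pos hs1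
  have hTpos : 0 < T := by rw [hT]; positivity
  -- eigenvector equations
  have heigR1 : A.mulVec R1 = (1 - Real.sqrt 2) • R1 := by
    funext i
    fin_cases i <;>
      simp [hA, hR1, Matrix.mulVec, dotProduct, Fin.sum_univ_two] <;>
      (first | ring1 | linear_combination ((-1:ℝ)/2) * hs)
  have heigE1 : A.mulVec ![1, Real.sqrt 2 / 2] = (1 + Real.sqrt 2) • ![1, Real.sqrt 2 / 2] := by
    funext i
    fin_cases i <;>
      simp [hA, Matrix.mulVec, dotProduct, Fin.sum_univ_two] <;>
      (first | ring1 | linear_combination ((-1:ℝ)/2) * hs)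
  -- decomposition of the solution into traveling waves
  have hdec : ∀ t ∈ Set.Ioo (0:ℝ) T, ∀ x : ℝ,
      Usol x t = gOne (x - (1 - Real.sqrt 2) * t) • R1
        + gTwo (x - (1 + Real.sqrt 2) * t) • ![1, Real.sqrt 2 / 2] := by
    intro t ht x
    have ht1 : 0 < t := ht.1
    have ht2 : t * (2 * Real.sqrt 2) < 1 := by
      have := ht.2
      rw [hT] at this
      exact (lt_div_iff₀ (by positivity)).1 this
    have hst : 0 < Real.sqrt 2 * t := by positivity
    rw [hUsol]
    unfold gOne gTwo
    split_ifs <;>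
      first
        | (exfalso; linarith)
        | (funext i; fin_cases i <;> simp [hR1] <;>
            (first | ring1 | linear_combination ((-1:ℝ)/2) * hs))
  refine ⟨?_, ?_, heigR1, ?_⟩
  · -- part (a)
    intro φ hφ hφc hφs
    have hdiff := hφ.differentiable (by simp)
    have hdiffx : ∀ x t : ℝ, DifferentiableAt ℝ (fun s => φ x s) t := fun x t =>
      (hdiff (x, t)).comp t ((differentiableAt_const x).prodMk differentiableAt_id)
    have hdifft : ∀ x t : ℝ, DifferentiableAt ℝ (fun y => φ y t) x := fun x t =>
      (hdiff (x, t)).comp (g := fun p : ℝ × ℝ => φ p.1 p.2) (f := fun y : ℝ => (y, t)) x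
        ((differentiableAt_id (x := x)).prodMk (differentiableAt_const t))
    set ψ1 : ℝ × ℝ → ℝ := fun p => R1 ⬝ᵥ φ p.1 p.2 with hψ1def
    set ψ2 : ℝ × ℝ → ℝ := fun p => ![1, Real.sqrt 2 / 2] ⬝ᵥ φ p.1 p.2 with hψ2def
    have hcompi : ∀ i, ContDiff ℝ (⊤ : ℕ∞) (fun p : ℝ × ℝ => φ p.1 p.2 i) := fun i =>
      contDiff_pi.1 hφ i
    have hsm : ∀ c : Fin 2 → ℝ, ContDiff ℝ (⊤ : ℕ∞) (fun p : ℝ × ℝ => c ⬝ᵥ φ p.1 p.2) := by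
      intro c
      have he : (fun p : ℝ × ℝ => c ⬝ᵥ φ p.1 p.2)
          = fun p : ℝ × ℝ => c 0 * φ p.1 p.2 0 + c 1 * φ p.1 p.2 1 := by
        funext p; simp [dotProduct, Fin.sum_univ_two]
      rw [he]
      exact (contDiff_const.mul (hcompi 0)).add (contDiff_const.mul (hcompi 1))
    have hcsd : ∀ c : Fin 2 → ℝ, HasCompactSupport (fun p : ℝ × ℝ => c ⬝ᵥ φ p.1 p.2) := by
      intro c
      exact hφc.comp_left (g := fun v : Fin 2 → ℝ => c ⬝ᵥ v) (by simp)
    have hts : ∀ c : Fin 2 → ℝ, tsupport (fun p : ℝ × ℝ => c ⬝ᵥ φ p.1 p.2)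
        ⊆ {p : ℝ × ℝ | p.2 < T} := by
      intro c
      have h0 : tsupport (fun p : ℝ × ℝ => c ⬝ᵥ φ p.1 p.2)
          ⊆ tsupport (fun p : ℝ × ℝ => φ p.1 p.2) := by
        apply closure_mono
        intro p hp
        simp only [Function.mem_support] at hp ⊢
        intro h0
        exact hp (by rw [h0, dotProduct_zero])
      exact h0.trans fun p hp => (hφs hp).2
    have h1s : ContDiff ℝ (⊤ : ℕ∞) ψ1 := by rw [hψ1def]; exact hsm R1
    have h2s : ContDiff ℝ (⊤ : ℕ∞) ψ2 := by rw [hψ2def]; exact hsm _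
    have h1c : HasCompactSupport ψ1 := by rw [hψ1def]; exact hcsd R1
    have h2c : HasCompactSupport ψ2 := by rw [hψ2def]; exact hcsd _
    have h1t : tsupport ψ1 ⊆ {p : ℝ × ℝ | p.2 < T} := by rw [hψ1def]; exact hts R1
    have h2t : tsupport ψ2 ⊆ {p : ℝ × ℝ | p.2 < T} := by rw [hψ2def]; exact hts _
    -- margin from the left boundary
    have hmargin : ∃ a : ℝ, -1 < a ∧ ∀ p : ℝ × ℝ, p.1 ≤ a → φ p.1 p.2 = 0 := by
      rcases Set.eq_empty_or_nonempty (tsupport (fun p : ℝ × ℝ => φ p.1 p.2)) with he | hne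
      · exact ⟨0, by norm_num, fun p _ => image_eq_zero_of_notMem_tsupport (f := fun p : ℝ × ℝ => φ p.1 p.2) (x := p) (by simp [he])⟩
      · obtain ⟨p0, hp0K, hmin⟩ := IsCompact.exists_isMinOn hφc hne continuous_fst.continuousOn
        have hp0 : -1 < p0.1 := (hφs hp0K).1
        refine ⟨(p0.1 + -1) / 2, by linarith, ?_⟩
        intro p hp
        apply image_eq_zero_of_notMem_tsupport (f := fun p : ℝ × ℝ => φ p.1 p.2) (x := p)
        intro hmem
        have h : p0.1 ≤ p.1 := hmin hmem
        linarith
    obtain ⟨a, ha1, ha0⟩ := hmargin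
    have hψzero : ∀ (c : Fin 2 → ℝ) (x s : ℝ), x ≤ a → c ⬝ᵥ φ x s = 0 := by
      intro c x s hx
      rw [show φ x s = 0 from ha0 (x, s) hx, dotProduct_zero]
    have hder0 : ∀ (c : Fin 2 → ℝ) (x t : ℝ), x ≤ -1 →
        deriv (fun s => c ⬝ᵥ φ x s) t = 0 ∧ deriv (fun y => c ⬝ᵥ φ y t) x = 0 := by
      intro c x t hx
      constructor
      · have h : (fun s => c ⬝ᵥ φ x s) = fun _ => (0:ℝ) := by
          funext s; exact hψzero c x s (by linarith)
        rw [h, deriv_const]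
      · have hev : (fun y => c ⬝ᵥ φ y t) =ᶠ[nhds x] fun _ => (0:ℝ) := by
          filter_upwards [Iio_mem_nhds (show x < a by linarith)] with y hy
          exact hψzero c y t (le_of_lt hy)
        rw [hev.deriv_eq, deriv_const]
    -- transport identities for the two traveling waves
    have t1 := transport T (1 - Real.sqrt 2) hTpos gOne gOne_measurable 3 gOne_bound
      ψ1 h1s h1c h1t
    have t2 := transport T (1 + Real.sqrt 2) hTpos gTwo gTwo_measurable 3 gTwo_bound
      ψ2 h2s h2c h2t
    -- pointwise identity for the integrand
    have hpt : ∀ t ∈ Set.Ioo (0:ℝ) T, ∀ x : ℝ,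
        Usol x t ⬝ᵥ deriv (fun s => φ x s) t + A.mulVec (Usol x t) ⬝ᵥ deriv (fun y => φ y t) x
        = gOne (x - (1 - Real.sqrt 2) * t) *
            (deriv (fun s => ψ1 (x, s)) t + (1 - Real.sqrt 2) * deriv (fun y => ψ1 (y, t)) x)
          + gTwo (x - (1 + Real.sqrt 2) * t) *
            (deriv (fun s => ψ2 (x, s)) t + (1 + Real.sqrt 2) * deriv (fun y => ψ2 (y, t)) x) := by
      intro t ht x
      have d1t : deriv (fun s => ψ1 (x, s)) t = R1 ⬝ᵥ deriv (fun s => φ x s) t :=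
        dot_deriv R1 (fun s => φ x s) t (hdiffx x t)
      have d1x : deriv (fun y => ψ1 (y, t)) x = R1 ⬝ᵥ deriv (fun y => φ y t) x :=
        dot_deriv R1 (fun y => φ y t) x (hdifft x t)
      have d2t : deriv (fun s => ψ2 (x, s)) t
          = ![1, Real.sqrt 2 / 2] ⬝ᵥ deriv (fun s => φ x s) t :=
        dot_deriv _ (fun s => φ x s) t (hdiffx x t)
      have d2x : deriv (fun y => ψ2 (y, t)) x
          = ![1, Real.sqrt 2 / 2] ⬝ᵥ deriv (fun y => φ y t) x :=
        dot_deriv _ (fun y => φ y t) x (hdifft x t)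
      rw [d1t, d1x, d2t, d2x, hdec t ht x]
      rw [Matrix.mulVec_add, Matrix.mulVec_smul, Matrix.mulVec_smul, heigR1, heigE1]
      simp only [add_dotProduct, smul_dotProduct, smul_eq_mul]
      ring
    -- vanishing of the new integrand left of the boundary
    have hvanish : ∀ t : ℝ, t ∈ Set.Ioo (0:ℝ) T → ∀ x : ℝ, x ∉ Set.Ioi (-1:ℝ) →
        gOne (x - (1 - Real.sqrt 2) * t) *
            (deriv (fun s => ψ1 (x, s)) t + (1 - Real.sqrt 2) * deriv (fun y => ψ1 (y, t)) x)
          + gTwo (x - (1 + Real.sqrt 2) * t) *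
            (deriv (fun s => ψ2 (x, s)) t + (1 + Real.sqrt 2) * deriv (fun y => ψ2 (y, t)) x)
          = 0 := by
      intro t ht x hx
      have hx1 : x ≤ -1 := by simpa using hx
      have e1t : deriv (fun s => ψ1 (x, s)) t = 0 := (hder0 R1 x t hx1).1
      have e1x : deriv (fun y => ψ1 (y, t)) x = 0 := (hder0 R1 x t hx1).2
      have e2t : deriv (fun s => ψ2 (x, s)) t = 0 := (hder0 ![1, Real.sqrt 2 / 2] x t hx1).1
      have e2x : deriv (fun y => ψ2 (y, t)) x = 0 := (hder0 ![1, Real.sqrt 2 / 2] x t hx1).2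
      rw [e1t, e1x, e2t, e2x]
      ring
    -- inner integral identity
    have hstep1 : ∀ t ∈ Set.Ioo (0:ℝ) T,
        (∫ x in Set.Ioi (-1:ℝ), (Usol x t ⬝ᵥ deriv (fun s => φ x s) t
            + A.mulVec (Usol x t) ⬝ᵥ deriv (fun y => φ y t) x))
        = (∫ x, gOne (x - (1 - Real.sqrt 2) * t) *
              (deriv (fun s => ψ1 (x, s)) t + (1 - Real.sqrt 2) * deriv (fun y => ψ1 (y, t)) x))
          + (∫ x, gTwo (x - (1 + Real.sqrt 2) * t) *
              (deriv (fun s => ψ2 (x, s)) t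
                + (1 + Real.sqrt 2) * deriv (fun y => ψ2 (y, t)) x)) := by
      intro t ht
      rw [setIntegral_congr_fun measurableSet_Ioi (fun x _ => hpt t ht x)]
      rw [setIntegral_eq_integral_of_forall_compl_eq_zero (fun x hx => hvanish t ht x hx)]
      exact integral_add
        (inner_integrable ψ1 h1s h1c gOne gOne_measurable gOne_bound _ t)
        (inner_integrable ψ2 h2s h2c gTwo gTwo_measurable gTwo_bound _ t)
    have houter : (∫ t in Set.Ioo (0:ℝ) T, ∫ x in Set.Ioi (-1:ℝ),
          (Usol x t ⬝ᵥ deriv (fun s => φ x s) t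
            + A.mulVec (Usol x t) ⬝ᵥ deriv (fun y => φ y t) x))
        = (- ∫ x, gOne x * ψ1 (x, 0)) + (- ∫ x, gTwo x * ψ2 (x, 0)) := by
      rw [setIntegral_congr_fun measurableSet_Ioo hstep1]
      rw [integral_add t1.1 t2.1]
      rw [t1.2, t2.2]
    -- initial datum identity
    have hU0dec : ∀ x : ℝ, U0 x ⬝ᵥ φ x 0 = gOne x * ψ1 (x, 0) + gTwo x * ψ2 (x, 0) := by
      intro x
      by_cases hx : x ≤ -1
      · have h0 : φ x 0 = 0 := ha0 (x, 0) (by linarith)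
        have h1 : ψ1 (x, 0) = R1 ⬝ᵥ φ x 0 := rfl
        have h2 : ψ2 (x, 0) = ![1, Real.sqrt 2 / 2] ⬝ᵥ φ x 0 := rfl
        rw [h1, h2, h0]
        simp
      · push_neg at hx
        have h1 : ψ1 (x, 0) = R1 ⬝ᵥ φ x 0 := rfl
        have h2 : ψ2 (x, 0) = ![1, Real.sqrt 2 / 2] ⬝ᵥ φ x 0 := rfl
        rw [h1, h2, hU0]
        unfold gOne gTwo
        split_ifs <;>
          first
            | (exfalso; linarith)
            | (simp [hR1, dotProduct, Fin.sum_univ_two] <;>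
                (first | ring1 | linear_combination (-(φ x 0 1) / 2 : ℝ) * hs))
    have hinit : (∫ x in Set.Ioi (-1:ℝ), U0 x ⬝ᵥ φ x 0)
        = (∫ x, gOne x * ψ1 (x, 0)) + (∫ x, gTwo x * ψ2 (x, 0)) := by
      rw [setIntegral_eq_integral_of_forall_compl_eq_zero
        (fun x hx => by
          have hx1 : x ≤ -1 := by simpa using hx
          rw [show φ x 0 = 0 from ha0 (x, 0) (by linarith), dotProduct_zero])]
      rw [show (fun x => U0 x ⬝ᵥ φ x 0) = fun x => gOne x * ψ1 (x, 0) + gTwo x * ψ2 (x, 0)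
        from funext hU0dec]
      exact integral_add
        (slice_integrable ψ1 h1s.continuous h1c gOne gOne_measurable gOne_bound)
        (slice_integrable ψ2 h2s.continuous h2c gTwo gTwo_measurable gTwo_bound)
    rw [houter, hinit]
    ring
  · -- part (b)
    intro t ht
    have hpos : 0 < (1 + Real.sqrt 2) * t := by
      have := ht.1; positivity
    have hev : (fun x => Usol x t) =ᶠ[nhdsWithin (-1) (Set.Ioi (-1))] fun _ => Ubar := by
      filter_upwards [Ioo_mem_nhdsGT_of_mem
        (show (-1:ℝ) ∈ Set.Ico (-1:ℝ) (-1 + (1 + Real.sqrt 2) * t) from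
          ⟨le_refl _, by linarith⟩)] with x hx
      rw [hUsol, if_pos (by linarith [hx.2]), hUbar]
    exact Filter.Tendsto.congr' hev.symm tendsto_const_nhds
  · -- part (d)
    funext i
    fin_cases i <;> simp [hUl, hUbar, hR1] <;> ring
end

section
/- Define U = (h,u): (-1,∞) × (0,∞) → ℝ² by (h,u)(x,t) = ((3√2+2)/(√2+1), (√2+2)/(2√2+2)) for 0 < x+1 < (1+√2)t; (h,u)(x,t) = (3,1) for x+1 > (1+√2)t and x < (1-√2)t; (h,u)(x,t) = (2, 1 + √2/2) for (1-√2)t < x < (1+√2)t; and (h,u)(x,t) = (1,1) for x > (1+√2)t. Then for all times 0 < t < 1/(2√2): (a) U is a distributional solution of the linearized shallow water system with h̃ = 2, ũ = 1, g = 1 on (-1,∞) × (0, 1/(2√2)) with initial datum (h,u)(x,0) = (3,1) for x < 0 and (1,1) for x > 0, i.e. for every smooth test function φ compactly supported in (-1,∞) × [0, 1/(2√2)), ∫∫ [⟨U, ∂_t φ⟩ + ⟨A U, ∂_x φ⟩] dx dt + ∫ ⟨U_0(x), φ(x,0)⟩ dx = 0 with A = [[1,2],[1,1]]; (b) the boundary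 trace Ū = lim_{x→-1⁺} U(x,t) equals ((3√2+2)/(√2+1), (√2+2)/(2√2+2)), and the Dirichlet datum U_l = (2,1) satisfies U_l - Ū = -(√2/(√2+1))·R̃_1 with R̃_1 = (1, -1/2). -/
open Matrix MeasureTheory

section EddyHelpers
open Matrix MeasureTheory Set Filter

noncomputable def dotCLM (W : Fin 2 → ℝ) : (Fin 2 → ℝ) →L[ℝ] ℝ :=
  W 0 • (ContinuousLinearMap.proj 0) + W 1 • (ContinuousLinearMap.proj 1)

@[simp] lemma dotCLM_apply (W v : Fin 2 → ℝ) : dotCLM W v = W ⬝ᵥ v := by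
  simp [dotCLM, dotProduct, Fin.sum_univ_two]

section helpers

variable {φ : ℝ → ℝ → (Fin 2 → ℝ)}

lemma hasDerivAt_slice_x (hφ : ContDiff ℝ (⊤ : ℕ∞) fun p : ℝ × ℝ => φ p.1 p.2) (x t : ℝ) :
    HasDerivAt (fun y => φ y t)
      (fderiv ℝ (fun p : ℝ × ℝ => φ p.1 p.2) (x, t) (1, 0)) x := by
  have h := (hφ.differentiable (by simp) (x, t)).hasFDerivAt
  have hc : HasDerivAt (fun y : ℝ => ((y, t) : ℝ × ℝ)) ((1 : ℝ), (0 : ℝ)) x :=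
    (hasDerivAt_id x).prodMk (hasDerivAt_const x t)
  exact h.comp_hasDerivAt x hc

lemma hasDerivAt_slice_t (hφ : ContDiff ℝ (⊤ : ℕ∞) fun p : ℝ × ℝ => φ p.1 p.2) (x t : ℝ) :
    HasDerivAt (fun s => φ x s)
      (fderiv ℝ (fun p : ℝ × ℝ => φ p.1 p.2) (x, t) (0, 1)) t := by
  have h := (hφ.differentiable (by simp) (x, t)).hasFDerivAt
  have hc : HasDerivAt (fun s : ℝ => ((x, s) : ℝ × ℝ)) ((0 : ℝ), (1 : ℝ)) t :=
    (hasDerivAt_const t x).prodMk (hasDerivAt_id t)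
  exact h.comp_hasDerivAt t hc

lemma hasDerivAt_line (hφ : ContDiff ℝ (⊤ : ℕ∞) fun p : ℝ × ℝ => φ p.1 p.2)
    (W : Fin 2 → ℝ) (l y t : ℝ) :
    HasDerivAt (fun s => W ⬝ᵥ φ (y + l * s) s)
      (W ⬝ᵥ (fderiv ℝ (fun p : ℝ × ℝ => φ p.1 p.2) (y + l * t, t) (l, 1))) t := by
  have h := (hφ.differentiable (by simp) (y + l * t, t)).hasFDerivAt
  have hc : HasDerivAt (fun s : ℝ => ((y + l * s, s) : ℝ × ℝ)) ((l : ℝ), (1 : ℝ)) t := by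
    have h1 : HasDerivAt (fun s : ℝ => y + l * s) l t := by
      simpa using ((hasDerivAt_id t).const_mul l).const_add y
    exact h1.prodMk (hasDerivAt_id t)
  have h2 := h.comp_hasDerivAt_of_eq t hc rfl
  have h3 := ((dotCLM W).hasFDerivAt.comp_hasDerivAt t h2)
  have h4 : (fun s => W ⬝ᵥ φ (y + l * s) s) = (dotCLM W) ∘ (fun p : ℝ × ℝ => φ p.1 p.2) ∘ (fun s => (y + l * s, s)) := by
    funext s; simp
  rw [h4, ← dotCLM_apply]
  exact h3

lemma pair_decomp (F : ℝ × ℝ →L[ℝ] (Fin 2 → ℝ)) (l : ℝ) :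
    F (l, 1) = l • F (1, 0) + F (0, 1) := by
  have : ((l : ℝ), (1 : ℝ)) = l • ((1 : ℝ), (0 : ℝ)) + ((0 : ℝ), (1 : ℝ)) := by
    simp [Prod.ext_iff]
  rw [this]
  simp only [map_add, _root_.map_smul]

/-- pointwise identity: the line derivative equals the PDE integrand combination -/
lemma line_deriv_eq (hφ : ContDiff ℝ (⊤ : ℕ∞) fun p : ℝ × ℝ => φ p.1 p.2)
    (W : Fin 2 → ℝ) (l y t : ℝ) :
    W ⬝ᵥ (fderiv ℝ (fun p : ℝ × ℝ => φ p.1 p.2) (y + l * t, t) (l, 1))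
      = W ⬝ᵥ deriv (fun s => φ (y + l * t) s) t
        + l * (W ⬝ᵥ deriv (fun z => φ z t) (y + l * t)) := by
  rw [pair_decomp, (hasDerivAt_slice_x hφ (y + l * t) t).deriv,
    (hasDerivAt_slice_t hφ (y + l * t) t).deriv, dotProduct_add,
    dotProduct_smul]
  simp only [smul_eq_mul]
  ring

end helpers

section keysec

variable {φ : ℝ → ℝ → (Fin 2 → ℝ)}

/-- the shear homeomorphism `(t,y) ↦ (y + l t, t)` -/
noncomputable def shear (l : ℝ) : (ℝ × ℝ) ≃ₜ (ℝ × ℝ) where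
  toFun q := (q.2 + l * q.1, q.1)
  invFun p := (p.2, p.1 - l * p.2)
  left_inv q := by simp
  right_inv p := by simp
  continuous_toFun := by fun_prop
  continuous_invFun := by fun_prop

lemma cont_G (hφ : ContDiff ℝ (⊤ : ℕ∞) fun p : ℝ × ℝ => φ p.1 p.2) (W : Fin 2 → ℝ) (l : ℝ) :
    Continuous fun p : ℝ × ℝ =>
      W ⬝ᵥ fderiv ℝ (fun p : ℝ × ℝ => φ p.1 p.2) p (l, 1) := by
  have h1 : Continuous (fderiv ℝ (fun p : ℝ × ℝ => φ p.1 p.2)) :=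
    hφ.continuous_fderiv (by simp)
  have h2 := (dotCLM W).continuous.comp (h1.clm_apply (continuous_const (y := ((l:ℝ),(1:ℝ)))))
  exact h2.congr fun p => by simp [Function.comp]

lemma hcs_G (hsupp : HasCompactSupport fun p : ℝ × ℝ => φ p.1 p.2) (W : Fin 2 → ℝ) (l : ℝ) :
    HasCompactSupport fun p : ℝ × ℝ =>
      W ⬝ᵥ fderiv ℝ (fun p : ℝ × ℝ => φ p.1 p.2) p (l, 1) := by
  have h1 : HasCompactSupport fun p : ℝ × ℝ =>
      fderiv ℝ (fun p : ℝ × ℝ => φ p.1 p.2) p (l, 1) := hsupp.fderiv_apply ℝ (l, 1)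
  exact h1.comp_left (g := fun v => W ⬝ᵥ v) (dotProduct_zero W)

lemma D_int (hφ : ContDiff ℝ (⊤ : ℕ∞) fun p : ℝ × ℝ => φ p.1 p.2)
    (hsupp : HasCompactSupport fun p : ℝ × ℝ => φ p.1 p.2) (W : Fin 2 → ℝ) (l : ℝ) :
    Integrable (fun q : ℝ × ℝ =>
      W ⬝ᵥ fderiv ℝ (fun p : ℝ × ℝ => φ p.1 p.2) (q.2 + l * q.1, q.1) (l, 1))
      (volume.prod volume) := by
  have h1 : (fun q : ℝ × ℝ =>
      W ⬝ᵥ fderiv ℝ (fun p : ℝ × ℝ => φ p.1 p.2) (q.2 + l * q.1, q.1) (l, 1))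
      = (fun p : ℝ × ℝ => W ⬝ᵥ fderiv ℝ (fun p : ℝ × ℝ => φ p.1 p.2) p (l, 1))
          ∘ (shear l) := rfl
  rw [h1]
  exact ((cont_G hφ W l).comp (shear l).continuous).integrable_of_hasCompactSupport
    ((hcs_G hsupp W l).comp_homeomorph (shear l))

lemma Q_int (hφ : ContDiff ℝ (⊤ : ℕ∞) fun p : ℝ × ℝ => φ p.1 p.2)
    (hsupp : HasCompactSupport fun p : ℝ × ℝ => φ p.1 p.2) {T : ℝ}
    (W : Fin 2 → ℝ) (l : ℝ) (E : Set ℝ) (hE : MeasurableSet E) :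
    Integrable (Function.uncurry fun t y => E.indicator
        (fun y => W ⬝ᵥ fderiv ℝ (fun p : ℝ × ℝ => φ p.1 p.2) (y + l * t, t) (l, 1)) y)
      ((volume.restrict (Set.Ioo 0 T)).prod volume) := by
  have h1 : (Function.uncurry fun t y => E.indicator
        (fun y => W ⬝ᵥ fderiv ℝ (fun p : ℝ × ℝ => φ p.1 p.2) (y + l * t, t) (l, 1)) y)
      = ({q : ℝ × ℝ | q.2 ∈ E}).indicator (fun q : ℝ × ℝ =>
          W ⬝ᵥ fderiv ℝ (fun p : ℝ × ℝ => φ p.1 p.2) (q.2 + l * q.1, q.1) (l, 1)) := by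
    funext q
    by_cases h : q.2 ∈ E <;>
      simp [Function.uncurry, Set.indicator_apply, h]
  rw [h1]
  have h2 := ((D_int hφ hsupp W l).indicator
    (measurable_snd hE : MeasurableSet {q : ℝ × ℝ | q.2 ∈ E}))
  have h3 : (volume.restrict (Set.Ioo (0:ℝ) T)).prod (volume : Measure ℝ)
      = ((volume : Measure ℝ).prod volume).restrict ((Set.Ioo 0 T) ×ˢ Set.univ) := by
    rw [← Measure.prod_restrict, Measure.restrict_univ]
  rw [h3]
  exact h2.restrict

end keysec

section keysec2
variable {φ : ℝ → ℝ → (Fin 2 → ℝ)}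

lemma key_integral (hφ : ContDiff ℝ (⊤ : ℕ∞) fun p : ℝ × ℝ => φ p.1 p.2)
    (hsupp : HasCompactSupport fun p : ℝ × ℝ => φ p.1 p.2) {T : ℝ} (hT : 0 < T)
    (hT' : tsupport (fun p : ℝ × ℝ => φ p.1 p.2) ⊆ {p : ℝ × ℝ | p.2 < T})
    (W : Fin 2 → ℝ) (l : ℝ) (E : Set ℝ) (hE : MeasurableSet E) :
    (∫ t in Set.Ioo (0:ℝ) T, ∫ x, ({x : ℝ | x - l * t ∈ E}).indicator
        (fun x => W ⬝ᵥ deriv (fun s => φ x s) t + l * (W ⬝ᵥ deriv (fun z => φ z t) x)) x)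
      = - ∫ x, E.indicator (fun x => W ⬝ᵥ φ x 0) x := by
  set Φ : ℝ × ℝ → (Fin 2 → ℝ) := fun p => φ p.1 p.2 with hΦ
  -- step 1: translate the inner integral
  have step1 : ∀ t : ℝ, (∫ x, ({x : ℝ | x - l * t ∈ E}).indicator
        (fun x => W ⬝ᵥ deriv (fun s => φ x s) t + l * (W ⬝ᵥ deriv (fun z => φ z t) x)) x)
      = ∫ y, E.indicator (fun y => W ⬝ᵥ fderiv ℝ Φ (y + l * t, t) (l, 1)) y := by
    intro t
    rw [← MeasureTheory.integral_add_right_eq_self (μ := volume)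
      (({x : ℝ | x - l * t ∈ E}).indicator
        (fun x => W ⬝ᵥ deriv (fun s => φ x s) t + l * (W ⬝ᵥ deriv (fun z => φ z t) x)))
      (l * t)]
    congr 1
    funext y
    have hmem : (y + l * t ∈ {x : ℝ | x - l * t ∈ E}) ↔ y ∈ E := by
      simp
    by_cases h : y ∈ E
    · rw [Set.indicator_of_mem (hmem.mpr h), Set.indicator_of_mem h]
      exact (line_deriv_eq hφ W l y t).symm
    · rw [Set.indicator_of_notMem (fun hc => h (hmem.mp hc)),
        Set.indicator_of_notMem h]
  simp only [step1]
  -- step 2: swap the two integrals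
  rw [MeasureTheory.integral_integral_swap (Q_int hφ hsupp W l E hE)]
  -- step 3: fundamental theorem of calculus in `t` for each `y`
  have step3 : ∀ y : ℝ, (∫ t in Set.Ioo (0:ℝ) T,
      E.indicator (fun y => W ⬝ᵥ fderiv ℝ Φ (y + l * t, t) (l, 1)) y)
      = E.indicator (fun y => - (W ⬝ᵥ φ y 0)) y := by
    intro y
    by_cases h : y ∈ E
    · simp only [Set.indicator_of_mem h]
      have hderiv : ∀ t : ℝ, HasDerivAt (fun s => W ⬝ᵥ φ (y + l * s) s)
          (W ⬝ᵥ fderiv ℝ Φ (y + l * t, t) (l, 1)) t := fun t => hasDerivAt_line hφ W l y t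
      have hcont : Continuous fun t : ℝ => W ⬝ᵥ fderiv ℝ Φ (y + l * t, t) (l, 1) := by
        have := (cont_G hφ W l).comp
          ((continuous_const.add (continuous_const.mul continuous_id)).prodMk continuous_id :
            Continuous fun t : ℝ => ((y + l * t, t) : ℝ × ℝ))
        exact this
      have hIoc : (∫ t in Set.Ioo (0:ℝ) T, W ⬝ᵥ fderiv ℝ Φ (y + l * t, t) (l, 1))
          = ∫ t in (0:ℝ)..T, W ⬝ᵥ fderiv ℝ Φ (y + l * t, t) (l, 1) := by
        rw [intervalIntegral.integral_of_le hT.le, integral_Ioc_eq_integral_Ioo]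
      rw [hIoc, intervalIntegral.integral_eq_sub_of_hasDerivAt
        (fun t _ => hderiv t) (hcont.intervalIntegrable 0 T)]
      have hTzero : φ (y + l * T) T = 0 := by
        have : ((y + l * T, T) : ℝ × ℝ) ∉ tsupport Φ := by
          intro hc
          exact absurd (hT' hc) (by simp)
        exact image_eq_zero_of_notMem_tsupport (f := Φ) this
      simp [hTzero]
    · simp only [Set.indicator_of_notMem h, integral_zero]
  simp only [← hΦ, step3]
  rw [← MeasureTheory.integral_neg]
  congr 1
  funext y
  by_cases h : y ∈ E <;> simp [Set.indicator_apply, h]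

end keysec2

section keysec3
variable {φ : ℝ → ℝ → (Fin 2 → ℝ)}

lemma fderiv_pair_eq (hφ : ContDiff ℝ (⊤ : ℕ∞) fun p : ℝ × ℝ => φ p.1 p.2)
    (W : Fin 2 → ℝ) (l x t : ℝ) :
    W ⬝ᵥ fderiv ℝ (fun p : ℝ × ℝ => φ p.1 p.2) (x, t) (l, 1)
      = W ⬝ᵥ deriv (fun s => φ x s) t + l * (W ⬝ᵥ deriv (fun z => φ z t) x) := by
  have h := line_deriv_eq hφ W l (x - l * t) t
  rw [sub_add_cancel] at h
  exact h

lemma P_int (hφ : ContDiff ℝ (⊤ : ℕ∞) fun p : ℝ × ℝ => φ p.1 p.2)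
    (hsupp : HasCompactSupport fun p : ℝ × ℝ => φ p.1 p.2) {T : ℝ}
    (W : Fin 2 → ℝ) (l : ℝ) (E : Set ℝ) (hE : MeasurableSet E) :
    Integrable (fun z : ℝ × ℝ => ({x : ℝ | x - l * z.1 ∈ E}).indicator
        (fun x => W ⬝ᵥ deriv (fun s => φ x s) z.1
          + l * (W ⬝ᵥ deriv (fun u => φ u z.1) x)) z.2)
      ((volume.restrict (Set.Ioo 0 T)).prod volume) := by
  have hD : Integrable (fun z : ℝ × ℝ =>
      W ⬝ᵥ fderiv ℝ (fun p : ℝ × ℝ => φ p.1 p.2) (z.2, z.1) (l, 1))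
      ((volume : Measure ℝ).prod volume) := by
    have hc : Continuous (fun z : ℝ × ℝ =>
        W ⬝ᵥ fderiv ℝ (fun p : ℝ × ℝ => φ p.1 p.2) (z.2, z.1) (l, 1)) :=
      (cont_G hφ W l).comp (continuous_snd.prodMk continuous_fst)
    have hcs : HasCompactSupport (fun z : ℝ × ℝ =>
        W ⬝ᵥ fderiv ℝ (fun p : ℝ × ℝ => φ p.1 p.2) (z.2, z.1) (l, 1)) :=
      (hcs_G hsupp W l).comp_homeomorph (Homeomorph.prodComm ℝ ℝ)
    exact hc.integrable_of_hasCompactSupport hcs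
  have h1 : (fun z : ℝ × ℝ => ({x : ℝ | x - l * z.1 ∈ E}).indicator
        (fun x => W ⬝ᵥ deriv (fun s => φ x s) z.1
          + l * (W ⬝ᵥ deriv (fun u => φ u z.1) x)) z.2)
      = ({z : ℝ × ℝ | z.2 - l * z.1 ∈ E}).indicator
          (fun z : ℝ × ℝ =>
            W ⬝ᵥ fderiv ℝ (fun p : ℝ × ℝ => φ p.1 p.2) (z.2, z.1) (l, 1)) := by
    funext z
    by_cases h : z.2 - l * z.1 ∈ E
    · rw [Set.indicator_of_mem (by exact h), Set.indicator_of_mem (by exact h)]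
      exact (fderiv_pair_eq hφ W l z.2 z.1).symm
    · rw [Set.indicator_of_notMem (by exact h), Set.indicator_of_notMem (by exact h)]
  rw [h1]
  have hS : MeasurableSet {z : ℝ × ℝ | z.2 - l * z.1 ∈ E} :=
    (measurable_snd.sub (measurable_fst.const_mul l)) hE
  have h2 := hD.indicator hS
  have h3 : (volume.restrict (Set.Ioo (0:ℝ) T)).prod (volume : Measure ℝ)
      = ((volume : Measure ℝ).prod volume).restrict ((Set.Ioo 0 T) ×ˢ Set.univ) := by
    rw [← Measure.prod_restrict, Measure.restrict_univ]
  rw [h3]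
  exact h2.restrict

lemma slice_zero (hφ : ContDiff ℝ (⊤ : ℕ∞) fun p : ℝ × ℝ => φ p.1 p.2) {x t : ℝ}
    (hnot : ((x, t) : ℝ × ℝ) ∉ tsupport fun p : ℝ × ℝ => φ p.1 p.2) :
    φ x t = 0 ∧ deriv (fun z => φ z t) x = 0 ∧ deriv (fun s => φ x s) t = 0 := by
  have hopen : IsOpen (tsupport fun p : ℝ × ℝ => φ p.1 p.2)ᶜ :=
    (isClosed_tsupport _).isOpen_compl
  refine ⟨image_eq_zero_of_notMem_tsupport (f := fun p : ℝ × ℝ => φ p.1 p.2) hnot, ?_, ?_⟩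
  · have hmem : {z : ℝ | ((z, t) : ℝ × ℝ) ∈ (tsupport fun p : ℝ × ℝ => φ p.1 p.2)ᶜ}
        ∈ nhds x :=
      (hopen.preimage (continuous_id.prodMk continuous_const)).mem_nhds hnot
    have hev : (fun z => φ z t) =ᶠ[nhds x] (fun _ => (0 : Fin 2 → ℝ)) := by
      filter_upwards [hmem] with z hz
      exact image_eq_zero_of_notMem_tsupport (f := fun p : ℝ × ℝ => φ p.1 p.2) hz
    rw [hev.deriv_eq, deriv_const]
  · have hmem : {s : ℝ | ((x, s) : ℝ × ℝ) ∈ (tsupport fun p : ℝ × ℝ => φ p.1 p.2)ᶜ}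
        ∈ nhds t :=
      (hopen.preimage (continuous_const.prodMk continuous_id)).mem_nhds hnot
    have hev : (fun s => φ x s) =ᶠ[nhds t] (fun _ => (0 : Fin 2 → ℝ)) := by
      filter_upwards [hmem] with z hz
      exact image_eq_zero_of_notMem_tsupport (f := fun p : ℝ × ℝ => φ p.1 p.2) hz
    rw [hev.deriv_eq, deriv_const]

lemma init_int (hφ : ContDiff ℝ (⊤ : ℕ∞) fun p : ℝ × ℝ => φ p.1 p.2)
    (hsupp : HasCompactSupport fun p : ℝ × ℝ => φ p.1 p.2)
    (W : Fin 2 → ℝ) (E : Set ℝ) (hE : MeasurableSet E) :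
    Integrable (E.indicator (fun x => W ⬝ᵥ φ x 0)) (volume : Measure ℝ) := by
  have hc : Continuous (fun x : ℝ => W ⬝ᵥ φ x 0) := by
    have h2 := (dotCLM W).continuous.comp
      (hφ.continuous.comp (continuous_id.prodMk (continuous_const (y := (0:ℝ)))))
    exact h2.congr fun p => by simp [Function.comp]
  have hcs : HasCompactSupport (fun x : ℝ => W ⬝ᵥ φ x 0) := by
    refine HasCompactSupport.intro (hsupp.image continuous_fst) (fun x hx => ?_)
    have : φ x 0 = 0 := by
      refine image_eq_zero_of_notMem_tsupport (f := fun p : ℝ × ℝ => φ p.1 p.2)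
        (x := ((x, 0) : ℝ × ℝ)) (fun hc' => hx ⟨(x, 0), hc', rfl⟩)
    simp [this]
  exact (hc.integrable_of_hasCompactSupport hcs).indicator hE

end keysec3

end EddyHelpers

/-- The explicit piecewise constant function is, for times `0 < t < 1/(2√2)`, the
solution of the boundary Riemann problem for the linearized shallow water system
(`h̃ = 2`, `ũ = 1`, `g = 1`, i.e. `A = [[1,2],[1,1]]`) on `(-1,∞)` obtained as the
limit of the physical eddy viscosity: (a) it is a distributional solution with the
given initial datum; (b) its boundary trace is `Ū = ((3√2+2)/(√2+1), (√2+2)/(2√2+2))`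
and the Dirichlet datum `U_l = (2,1)` satisfies `U_l - Ū = -(√2/(√2+1))·R̃₁`, with
`R̃₁ = (1, -1/2)` the admissible eddy-viscosity boundary layer direction. -/
theorem linearized_shallow_water_eddy_viscosity_limit
    (A : Matrix (Fin 2) (Fin 2) ℝ) (hA : A = !![1, 2; 1, 1])
    (T : ℝ) (hT : T = 1 / (2 * Real.sqrt 2))
    -- the piecewise constant candidate solution
    (Usol : ℝ → ℝ → (Fin 2 → ℝ))
    (hUsol : ∀ x t, Usol x t =
      if x + 1 < (1 + Real.sqrt 2) * t then
        ![(3 * Real.sqrt 2 + 2) / (Real.sqrt 2 + 1),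
          (Real.sqrt 2 + 2) / (2 * Real.sqrt 2 + 2)]
      else if x < (1 - Real.sqrt 2) * t then ![3, 1]
      else if x < (1 + Real.sqrt 2) * t then ![2, 1 + Real.sqrt 2 / 2]
      else ![1, 1])
    -- the initial datum
    (U0 : ℝ → (Fin 2 → ℝ))
    (hU0 : ∀ x, U0 x = if x < 0 then ![3, 1] else ![1, 1])
    -- boundary trace, Dirichlet datum, boundary layer direction `R̃₁`
    (Ubar : Fin 2 → ℝ)
    (hUbar : Ubar = ![(3 * Real.sqrt 2 + 2) / (Real.sqrt 2 + 1),
      (Real.sqrt 2 + 2) / (2 * Real.sqrt 2 + 2)])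
    (Ul : Fin 2 → ℝ) (hUl : Ul = ![2, 1])
    (Rt1 : Fin 2 → ℝ) (hRt1 : Rt1 = ![1, -1 / 2]) :
    -- (a) distributional solution on `(-1,∞) × (0,T)` for test functions compactly
    -- supported in `(-1,∞) × [0,T)`
    ((∀ φ : ℝ → ℝ → (Fin 2 → ℝ),
        ContDiff ℝ (⊤ : ℕ∞) (fun p : ℝ × ℝ => φ p.1 p.2) →
        HasCompactSupport (fun p : ℝ × ℝ => φ p.1 p.2) →
        tsupport (fun p : ℝ × ℝ => φ p.1 p.2) ⊆ {p : ℝ × ℝ | -1 < p.1 ∧ p.2 < T} →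
        (∫ t in Set.Ioo (0 : ℝ) T, ∫ x in Set.Ioi (-1 : ℝ),
            (Usol x t ⬝ᵥ deriv (fun s => φ x s) t
              + A.mulVec (Usol x t) ⬝ᵥ deriv (fun y => φ y t) x))
          + (∫ x in Set.Ioi (-1 : ℝ), U0 x ⬝ᵥ φ x 0) = 0)
    -- (b) boundary trace and boundary layer direction
    ∧ (∀ t ∈ Set.Ioo (0 : ℝ) T,
        Filter.Tendsto (fun x => Usol x t) (nhdsWithin (-1) (Set.Ioi (-1))) (nhds Ubar))
    ∧ Ul - Ubar = (-(Real.sqrt 2 / (Real.sqrt 2 + 1)) : ℝ) • Rt1) := by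
  set q := Real.sqrt 2 with hq
  have hq2 : q ^ 2 = 2 := Real.sq_sqrt (by norm_num)
  have hq0 : 0 < q := Real.sqrt_pos.mpr (by norm_num)
  have hq1 : 1 < q := by nlinarith
  have hT0 : 0 < T := by rw [hT]; positivity
  refine ⟨?_, ?_, ?_⟩
  · -- part (a)
    intro φ hφ hsupp hsub
    have hsubT : tsupport (fun p : ℝ × ℝ => φ p.1 p.2) ⊆ {p : ℝ × ℝ | p.2 < T} :=
      fun p hp => (hsub hp).2
    have hmul : ∀ v : Fin 2 → ℝ, A.mulVec v = ![v 0 + 2 * v 1, v 0 + v 1] := by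
      intro v; rw [hA]; funext i
      fin_cases i <;>
        simp [Matrix.mulVec, dotProduct, Fin.sum_univ_two]
    have hV1 : (![(3 * q + 2) / (q + 1), (q + 2) / (2 * q + 2)] : Fin 2 → ℝ)
        = ![4 - q, q / 2] := by
      have hne : q + 1 ≠ 0 := by positivity
      have hne2 : 2 * q + 2 ≠ 0 := by positivity
      funext i; fin_cases i
      · simp; field_simp; linear_combination hq2
      · simp; field_simp; linear_combination (-1) * hq2
    -- pointwise decomposition
    have hpt : ∀ t ∈ Set.Ioo (0:ℝ) T, ∀ x : ℝ, (Usol x t ⬝ᵥ deriv (fun s => φ x s) t + A.mulVec (Usol x t) ⬝ᵥ deriv (fun y => φ y t) x)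
        = ({x : ℝ | x - (1 + q) * t ∈ Set.Iio (-1 : ℝ)}).indicator
        (fun x => ![1 - q, (q - 2) / 2] ⬝ᵥ deriv (fun s => φ x s) t
          + (1 + q) * (![1 - q, (q - 2) / 2] ⬝ᵥ deriv (fun z => φ z t) x)) x
      + (({x : ℝ | x - (1 - q) * t ∈ Set.Iio (0 : ℝ)}).indicator
        (fun x => ![1, -q / 2] ⬝ᵥ deriv (fun s => φ x s) t
          + (1 - q) * (![1, -q / 2] ⬝ᵥ deriv (fun z => φ z t) x)) x
      + (({x : ℝ | x - (1 + q) * t ∈ Set.Iio (0 : ℝ)}).indicator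
        (fun x => ![1, q / 2] ⬝ᵥ deriv (fun s => φ x s) t
          + (1 + q) * (![1, q / 2] ⬝ᵥ deriv (fun z => φ z t) x)) x
      + (({x : ℝ | x - (1 + q) * t ∈ (Set.univ : Set ℝ)}).indicator
        (fun x => ![(1 + q) / 2, (q + 2) / 4] ⬝ᵥ deriv (fun s => φ x s) t
          + (1 + q) * (![(1 + q) / 2, (q + 2) / 4] ⬝ᵥ deriv (fun z => φ z t) x)) x
      + ({x : ℝ | x - (1 - q) * t ∈ (Set.univ : Set ℝ)}).indicator
        (fun x => ![(1 - q) / 2, (2 - q) / 4] ⬝ᵥ deriv (fun s => φ x s) t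
          + (1 - q) * (![(1 - q) / 2, (2 - q) / 4] ⬝ᵥ deriv (fun z => φ z t) x)) x))) := by
      intro t ht x
      obtain ⟨ht0, htT⟩ := ht
      rw [hT] at htT
      have h2qt : 2 * q * t < 1 := by
        have := (lt_div_iff₀ (by positivity : (0:ℝ) < 2 * q)).mp htT
        linarith
      simp only [Set.indicator_apply, Set.mem_setOf_eq, Set.mem_Iio, Set.mem_univ, if_true]
      rcases lt_or_ge x (-1 + (1 + q) * t) with h1 | h1
      · rw [hUsol x t, if_pos (show x + 1 < (1 + q) * t by linarith), hV1,
          if_pos (show x - (1 + q) * t < -1 by linarith),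
          if_pos (show x - (1 - q) * t < 0 by nlinarith),
          if_pos (show x - (1 + q) * t < 0 by nlinarith)]
        rw [hmul]
        simp only [hmul, dotProduct, Fin.sum_univ_two, Matrix.cons_val_zero, Matrix.cons_val_one, Matrix.head_cons]
        linear_combination (-2 * deriv (fun y => φ y t) x 1) * hq2
      rcases lt_or_ge x ((1 - q) * t) with h2 | h2
      · rw [hUsol x t, if_neg (show ¬ x + 1 < (1 + q) * t by intro h; linarith),
          if_pos h2,
          if_neg (show ¬ x - (1 + q) * t < -1 by intro h; linarith),
          if_pos (show x - (1 - q) * t < 0 by linarith),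
          if_pos (show x - (1 + q) * t < 0 by nlinarith)]
        rw [hmul]
        simp only [hmul, dotProduct, Fin.sum_univ_two, Matrix.cons_val_zero, Matrix.cons_val_one, Matrix.head_cons]
        linear_combination (-(deriv (fun y => φ y t) x 0) - 3 / 2 * deriv (fun y => φ y t) x 1) * hq2
      rcases lt_or_ge x ((1 + q) * t) with h3 | h3
      · rw [hUsol x t, if_neg (show ¬ x + 1 < (1 + q) * t by intro h; linarith),
          if_neg (show ¬ x < (1 - q) * t by intro h; linarith),
          if_pos h3,
          if_neg (show ¬ x - (1 + q) * t < -1 by intro h; linarith),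
          if_neg (show ¬ x - (1 - q) * t < 0 by intro h; linarith),
          if_pos (show x - (1 + q) * t < 0 by linarith)]
        rw [hmul]
        simp only [hmul, dotProduct, Fin.sum_univ_two, Matrix.cons_val_zero, Matrix.cons_val_one, Matrix.head_cons]
        linear_combination (-(deriv (fun y => φ y t) x 0) - deriv (fun y => φ y t) x 1) * hq2
      · rw [hUsol x t, if_neg (show ¬ x + 1 < (1 + q) * t by intro h; linarith),
          if_neg (show ¬ x < (1 - q) * t by intro h; nlinarith),
          if_neg (show ¬ x < (1 + q) * t by intro h; linarith),
          if_neg (show ¬ x - (1 + q) * t < -1 by intro h; linarith),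
          if_neg (show ¬ x - (1 - q) * t < 0 by intro h; nlinarith),
          if_neg (show ¬ x - (1 + q) * t < 0 by intro h; linarith)]
        rw [hmul]
        simp only [hmul, dotProduct, Fin.sum_univ_two, Matrix.cons_val_zero, Matrix.cons_val_one, Matrix.head_cons]
        linear_combination (-(deriv (fun y => φ y t) x 0) - 1 / 2 * deriv (fun y => φ y t) x 1) * hq2
    -- replace the inner integral over `Ioi (-1)` by the decomposed full integral
    have hAB : (∫ t in Set.Ioo (0:ℝ) T, ∫ x in Set.Ioi (-1:ℝ), (Usol x t ⬝ᵥ deriv (fun s => φ x s) t + A.mulVec (Usol x t) ⬝ᵥ deriv (fun y => φ y t) x))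
        = ∫ t in Set.Ioo (0:ℝ) T, ∫ x, ({x : ℝ | x - (1 + q) * t ∈ Set.Iio (-1 : ℝ)}).indicator
        (fun x => ![1 - q, (q - 2) / 2] ⬝ᵥ deriv (fun s => φ x s) t
          + (1 + q) * (![1 - q, (q - 2) / 2] ⬝ᵥ deriv (fun z => φ z t) x)) x
      + (({x : ℝ | x - (1 - q) * t ∈ Set.Iio (0 : ℝ)}).indicator
        (fun x => ![1, -q / 2] ⬝ᵥ deriv (fun s => φ x s) t
          + (1 - q) * (![1, -q / 2] ⬝ᵥ deriv (fun z => φ z t) x)) x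
      + (({x : ℝ | x - (1 + q) * t ∈ Set.Iio (0 : ℝ)}).indicator
        (fun x => ![1, q / 2] ⬝ᵥ deriv (fun s => φ x s) t
          + (1 + q) * (![1, q / 2] ⬝ᵥ deriv (fun z => φ z t) x)) x
      + (({x : ℝ | x - (1 + q) * t ∈ (Set.univ : Set ℝ)}).indicator
        (fun x => ![(1 + q) / 2, (q + 2) / 4] ⬝ᵥ deriv (fun s => φ x s) t
          + (1 + q) * (![(1 + q) / 2, (q + 2) / 4] ⬝ᵥ deriv (fun z => φ z t) x)) x
      + ({x : ℝ | x - (1 - q) * t ∈ (Set.univ : Set ℝ)}).indicator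
        (fun x => ![(1 - q) / 2, (2 - q) / 4] ⬝ᵥ deriv (fun s => φ x s) t
          + (1 - q) * (![(1 - q) / 2, (2 - q) / 4] ⬝ᵥ deriv (fun z => φ z t) x)) x))) := by
      refine setIntegral_congr_fun measurableSet_Ioo (fun t ht => ?_)
      have hzero : ∀ x ∉ Set.Ioi (-1:ℝ), (Usol x t ⬝ᵥ deriv (fun s => φ x s) t + A.mulVec (Usol x t) ⬝ᵥ deriv (fun y => φ y t) x) = 0 := by
        intro x hx
        have hx' : x ≤ -1 := by simpa using hx
        have hnot : ((x, t) : ℝ × ℝ) ∉ tsupport (fun p : ℝ × ℝ => φ p.1 p.2) := by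
          intro hc
          have h := (hsub hc).1
          simp only [Set.mem_setOf_eq] at h
          linarith
        obtain ⟨-, hdx, hdt⟩ := slice_zero hφ hnot
        rw [hdx, hdt]
        simp
      rw [setIntegral_eq_integral_of_forall_compl_eq_zero hzero]
      have hfe : (fun x => (Usol x t ⬝ᵥ deriv (fun s => φ x s) t + A.mulVec (Usol x t) ⬝ᵥ deriv (fun y => φ y t) x))
          = fun x => ({x : ℝ | x - (1 + q) * t ∈ Set.Iio (-1 : ℝ)}).indicator
        (fun x => ![1 - q, (q - 2) / 2] ⬝ᵥ deriv (fun s => φ x s) t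
          + (1 + q) * (![1 - q, (q - 2) / 2] ⬝ᵥ deriv (fun z => φ z t) x)) x
      + (({x : ℝ | x - (1 - q) * t ∈ Set.Iio (0 : ℝ)}).indicator
        (fun x => ![1, -q / 2] ⬝ᵥ deriv (fun s => φ x s) t
          + (1 - q) * (![1, -q / 2] ⬝ᵥ deriv (fun z => φ z t) x)) x
      + (({x : ℝ | x - (1 + q) * t ∈ Set.Iio (0 : ℝ)}).indicator
        (fun x => ![1, q / 2] ⬝ᵥ deriv (fun s => φ x s) t
          + (1 + q) * (![1, q / 2] ⬝ᵥ deriv (fun z => φ z t) x)) x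
      + (({x : ℝ | x - (1 + q) * t ∈ (Set.univ : Set ℝ)}).indicator
        (fun x => ![(1 + q) / 2, (q + 2) / 4] ⬝ᵥ deriv (fun s => φ x s) t
          + (1 + q) * (![(1 + q) / 2, (q + 2) / 4] ⬝ᵥ deriv (fun z => φ z t) x)) x
      + ({x : ℝ | x - (1 - q) * t ∈ (Set.univ : Set ℝ)}).indicator
        (fun x => ![(1 - q) / 2, (2 - q) / 4] ⬝ᵥ deriv (fun s => φ x s) t
          + (1 - q) * (![(1 - q) / 2, (2 - q) / 4] ⬝ᵥ deriv (fun z => φ z t) x)) x))) := funext (hpt t ht)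
      rw [hfe]
    -- product integrability of the five pieces
    have hP1 := P_int (T := T) hφ hsupp (![1 - q, (q - 2) / 2] : Fin 2 → ℝ) (1 + q) (Set.Iio (-1 : ℝ)) measurableSet_Iio
    have hP2 := P_int (T := T) hφ hsupp (![1, -q / 2] : Fin 2 → ℝ) (1 - q) (Set.Iio (0 : ℝ)) measurableSet_Iio
    have hP3 := P_int (T := T) hφ hsupp (![1, q / 2] : Fin 2 → ℝ) (1 + q) (Set.Iio (0 : ℝ)) measurableSet_Iio
    have hP4 := P_int (T := T) hφ hsupp (![(1 + q) / 2, (q + 2) / 4] : Fin 2 → ℝ) (1 + q) ((Set.univ : Set ℝ)) MeasurableSet.univ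
    have hP5 := P_int (T := T) hφ hsupp (![(1 - q) / 2, (2 - q) / 4] : Fin 2 → ℝ) (1 - q) ((Set.univ : Set ℝ)) MeasurableSet.univ
    -- splitting of the double integral
    have hs1 : (∫ t in Set.Ioo (0:ℝ) T, ∫ x, ({x : ℝ | x - (1 + q) * t ∈ Set.Iio (-1 : ℝ)}).indicator
        (fun x => ![1 - q, (q - 2) / 2] ⬝ᵥ deriv (fun s => φ x s) t
          + (1 + q) * (![1 - q, (q - 2) / 2] ⬝ᵥ deriv (fun z => φ z t) x)) x
      + (({x : ℝ | x - (1 - q) * t ∈ Set.Iio (0 : ℝ)}).indicator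
        (fun x => ![1, -q / 2] ⬝ᵥ deriv (fun s => φ x s) t
          + (1 - q) * (![1, -q / 2] ⬝ᵥ deriv (fun z => φ z t) x)) x
      + (({x : ℝ | x - (1 + q) * t ∈ Set.Iio (0 : ℝ)}).indicator
        (fun x => ![1, q / 2] ⬝ᵥ deriv (fun s => φ x s) t
          + (1 + q) * (![1, q / 2] ⬝ᵥ deriv (fun z => φ z t) x)) x
      + (({x : ℝ | x - (1 + q) * t ∈ (Set.univ : Set ℝ)}).indicator
        (fun x => ![(1 + q) / 2, (q + 2) / 4] ⬝ᵥ deriv (fun s => φ x s) t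
          + (1 + q) * (![(1 + q) / 2, (q + 2) / 4] ⬝ᵥ deriv (fun z => φ z t) x)) x
      + ({x : ℝ | x - (1 - q) * t ∈ (Set.univ : Set ℝ)}).indicator
        (fun x => ![(1 - q) / 2, (2 - q) / 4] ⬝ᵥ deriv (fun s => φ x s) t
          + (1 - q) * (![(1 - q) / 2, (2 - q) / 4] ⬝ᵥ deriv (fun z => φ z t) x)) x))))
        = (∫ t in Set.Ioo (0:ℝ) T, ∫ x, ({x : ℝ | x - (1 + q) * t ∈ Set.Iio (-1 : ℝ)}).indicator
        (fun x => ![1 - q, (q - 2) / 2] ⬝ᵥ deriv (fun s => φ x s) t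
          + (1 + q) * (![1 - q, (q - 2) / 2] ⬝ᵥ deriv (fun z => φ z t) x)) x)
          + ∫ t in Set.Ioo (0:ℝ) T, ∫ x, (({x : ℝ | x - (1 - q) * t ∈ Set.Iio (0 : ℝ)}).indicator
        (fun x => ![1, -q / 2] ⬝ᵥ deriv (fun s => φ x s) t
          + (1 - q) * (![1, -q / 2] ⬝ᵥ deriv (fun z => φ z t) x)) x
            + (({x : ℝ | x - (1 + q) * t ∈ Set.Iio (0 : ℝ)}).indicator
        (fun x => ![1, q / 2] ⬝ᵥ deriv (fun s => φ x s) t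
          + (1 + q) * (![1, q / 2] ⬝ᵥ deriv (fun z => φ z t) x)) x
            + (({x : ℝ | x - (1 + q) * t ∈ (Set.univ : Set ℝ)}).indicator
        (fun x => ![(1 + q) / 2, (q + 2) / 4] ⬝ᵥ deriv (fun s => φ x s) t
          + (1 + q) * (![(1 + q) / 2, (q + 2) / 4] ⬝ᵥ deriv (fun z => φ z t) x)) x
            + ({x : ℝ | x - (1 - q) * t ∈ (Set.univ : Set ℝ)}).indicator
        (fun x => ![(1 - q) / 2, (2 - q) / 4] ⬝ᵥ deriv (fun s => φ x s) t
          + (1 - q) * (![(1 - q) / 2, (2 - q) / 4] ⬝ᵥ deriv (fun z => φ z t) x)) x))) :=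
      integral_integral_add hP1 ((hP2.add (hP3.add (hP4.add hP5))))
    have hs2 : (∫ t in Set.Ioo (0:ℝ) T, ∫ x, (({x : ℝ | x - (1 - q) * t ∈ Set.Iio (0 : ℝ)}).indicator
        (fun x => ![1, -q / 2] ⬝ᵥ deriv (fun s => φ x s) t
          + (1 - q) * (![1, -q / 2] ⬝ᵥ deriv (fun z => φ z t) x)) x
            + (({x : ℝ | x - (1 + q) * t ∈ Set.Iio (0 : ℝ)}).indicator
        (fun x => ![1, q / 2] ⬝ᵥ deriv (fun s => φ x s) t
          + (1 + q) * (![1, q / 2] ⬝ᵥ deriv (fun z => φ z t) x)) x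
            + (({x : ℝ | x - (1 + q) * t ∈ (Set.univ : Set ℝ)}).indicator
        (fun x => ![(1 + q) / 2, (q + 2) / 4] ⬝ᵥ deriv (fun s => φ x s) t
          + (1 + q) * (![(1 + q) / 2, (q + 2) / 4] ⬝ᵥ deriv (fun z => φ z t) x)) x
            + ({x : ℝ | x - (1 - q) * t ∈ (Set.univ : Set ℝ)}).indicator
        (fun x => ![(1 - q) / 2, (2 - q) / 4] ⬝ᵥ deriv (fun s => φ x s) t
          + (1 - q) * (![(1 - q) / 2, (2 - q) / 4] ⬝ᵥ deriv (fun z => φ z t) x)) x))))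
        = (∫ t in Set.Ioo (0:ℝ) T, ∫ x, ({x : ℝ | x - (1 - q) * t ∈ Set.Iio (0 : ℝ)}).indicator
        (fun x => ![1, -q / 2] ⬝ᵥ deriv (fun s => φ x s) t
          + (1 - q) * (![1, -q / 2] ⬝ᵥ deriv (fun z => φ z t) x)) x)
          + ∫ t in Set.Ioo (0:ℝ) T, ∫ x, (({x : ℝ | x - (1 + q) * t ∈ Set.Iio (0 : ℝ)}).indicator
        (fun x => ![1, q / 2] ⬝ᵥ deriv (fun s => φ x s) t
          + (1 + q) * (![1, q / 2] ⬝ᵥ deriv (fun z => φ z t) x)) x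
            + (({x : ℝ | x - (1 + q) * t ∈ (Set.univ : Set ℝ)}).indicator
        (fun x => ![(1 + q) / 2, (q + 2) / 4] ⬝ᵥ deriv (fun s => φ x s) t
          + (1 + q) * (![(1 + q) / 2, (q + 2) / 4] ⬝ᵥ deriv (fun z => φ z t) x)) x
            + ({x : ℝ | x - (1 - q) * t ∈ (Set.univ : Set ℝ)}).indicator
        (fun x => ![(1 - q) / 2, (2 - q) / 4] ⬝ᵥ deriv (fun s => φ x s) t
          + (1 - q) * (![(1 - q) / 2, (2 - q) / 4] ⬝ᵥ deriv (fun z => φ z t) x)) x)) :=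
      integral_integral_add hP2 ((hP3.add (hP4.add hP5)))
    have hs3 : (∫ t in Set.Ioo (0:ℝ) T, ∫ x, (({x : ℝ | x - (1 + q) * t ∈ Set.Iio (0 : ℝ)}).indicator
        (fun x => ![1, q / 2] ⬝ᵥ deriv (fun s => φ x s) t
          + (1 + q) * (![1, q / 2] ⬝ᵥ deriv (fun z => φ z t) x)) x
            + (({x : ℝ | x - (1 + q) * t ∈ (Set.univ : Set ℝ)}).indicator
        (fun x => ![(1 + q) / 2, (q + 2) / 4] ⬝ᵥ deriv (fun s => φ x s) t
          + (1 + q) * (![(1 + q) / 2, (q + 2) / 4] ⬝ᵥ deriv (fun z => φ z t) x)) x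
            + ({x : ℝ | x - (1 - q) * t ∈ (Set.univ : Set ℝ)}).indicator
        (fun x => ![(1 - q) / 2, (2 - q) / 4] ⬝ᵥ deriv (fun s => φ x s) t
          + (1 - q) * (![(1 - q) / 2, (2 - q) / 4] ⬝ᵥ deriv (fun z => φ z t) x)) x)))
        = (∫ t in Set.Ioo (0:ℝ) T, ∫ x, ({x : ℝ | x - (1 + q) * t ∈ Set.Iio (0 : ℝ)}).indicator
        (fun x => ![1, q / 2] ⬝ᵥ deriv (fun s => φ x s) t
          + (1 + q) * (![1, q / 2] ⬝ᵥ deriv (fun z => φ z t) x)) x)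
          + ∫ t in Set.Ioo (0:ℝ) T, ∫ x, (({x : ℝ | x - (1 + q) * t ∈ (Set.univ : Set ℝ)}).indicator
        (fun x => ![(1 + q) / 2, (q + 2) / 4] ⬝ᵥ deriv (fun s => φ x s) t
          + (1 + q) * (![(1 + q) / 2, (q + 2) / 4] ⬝ᵥ deriv (fun z => φ z t) x)) x
            + ({x : ℝ | x - (1 - q) * t ∈ (Set.univ : Set ℝ)}).indicator
        (fun x => ![(1 - q) / 2, (2 - q) / 4] ⬝ᵥ deriv (fun s => φ x s) t
          + (1 - q) * (![(1 - q) / 2, (2 - q) / 4] ⬝ᵥ deriv (fun z => φ z t) x)) x) :=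
      integral_integral_add hP3 ((hP4.add hP5))
    have hs4 : (∫ t in Set.Ioo (0:ℝ) T, ∫ x, (({x : ℝ | x - (1 + q) * t ∈ (Set.univ : Set ℝ)}).indicator
        (fun x => ![(1 + q) / 2, (q + 2) / 4] ⬝ᵥ deriv (fun s => φ x s) t
          + (1 + q) * (![(1 + q) / 2, (q + 2) / 4] ⬝ᵥ deriv (fun z => φ z t) x)) x
            + ({x : ℝ | x - (1 - q) * t ∈ (Set.univ : Set ℝ)}).indicator
        (fun x => ![(1 - q) / 2, (2 - q) / 4] ⬝ᵥ deriv (fun s => φ x s) t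
          + (1 - q) * (![(1 - q) / 2, (2 - q) / 4] ⬝ᵥ deriv (fun z => φ z t) x)) x))
        = (∫ t in Set.Ioo (0:ℝ) T, ∫ x, ({x : ℝ | x - (1 + q) * t ∈ (Set.univ : Set ℝ)}).indicator
        (fun x => ![(1 + q) / 2, (q + 2) / 4] ⬝ᵥ deriv (fun s => φ x s) t
          + (1 + q) * (![(1 + q) / 2, (q + 2) / 4] ⬝ᵥ deriv (fun z => φ z t) x)) x) + (∫ t in Set.Ioo (0:ℝ) T, ∫ x, ({x : ℝ | x - (1 - q) * t ∈ (Set.univ : Set ℝ)}).indicator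
        (fun x => ![(1 - q) / 2, (2 - q) / 4] ⬝ᵥ deriv (fun s => φ x s) t
          + (1 - q) * (![(1 - q) / 2, (2 - q) / 4] ⬝ᵥ deriv (fun z => φ z t) x)) x) :=
      integral_integral_add hP4 hP5
    -- the five evaluations via the key lemma
    have key1 := key_integral hφ hsupp hT0 hsubT (![1 - q, (q - 2) / 2] : Fin 2 → ℝ) (1 + q) (Set.Iio (-1 : ℝ)) measurableSet_Iio
    have key2 := key_integral hφ hsupp hT0 hsubT (![1, -q / 2] : Fin 2 → ℝ) (1 - q) (Set.Iio (0 : ℝ)) measurableSet_Iio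
    have key3 := key_integral hφ hsupp hT0 hsubT (![1, q / 2] : Fin 2 → ℝ) (1 + q) (Set.Iio (0 : ℝ)) measurableSet_Iio
    have key4 := key_integral hφ hsupp hT0 hsubT (![(1 + q) / 2, (q + 2) / 4] : Fin 2 → ℝ) (1 + q) ((Set.univ : Set ℝ)) MeasurableSet.univ
    have key5 := key_integral hφ hsupp hT0 hsubT (![(1 - q) / 2, (2 - q) / 4] : Fin 2 → ℝ) (1 - q) ((Set.univ : Set ℝ)) MeasurableSet.univ
    -- initial datum integrability
    have hJ1 := init_int hφ hsupp (![1 - q, (q - 2) / 2] : Fin 2 → ℝ) (Set.Iio (-1 : ℝ)) measurableSet_Iio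
    have hJ2 := init_int hφ hsupp (![1, -q / 2] : Fin 2 → ℝ) (Set.Iio (0 : ℝ)) measurableSet_Iio
    have hJ3 := init_int hφ hsupp (![1, q / 2] : Fin 2 → ℝ) (Set.Iio (0 : ℝ)) measurableSet_Iio
    have hJ4 := init_int hφ hsupp (![(1 + q) / 2, (q + 2) / 4] : Fin 2 → ℝ) ((Set.univ : Set ℝ)) MeasurableSet.univ
    have hJ5 := init_int hφ hsupp (![(1 - q) / 2, (2 - q) / 4] : Fin 2 → ℝ) ((Set.univ : Set ℝ)) MeasurableSet.univ
    -- pointwise decomposition of the initial datum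
    have hInitPt : ∀ x : ℝ, U0 x ⬝ᵥ φ x 0
        = (Set.Iio (-1 : ℝ)).indicator (fun x => ![1 - q, (q - 2) / 2] ⬝ᵥ φ x 0) x
          + ((Set.Iio (0 : ℝ)).indicator (fun x => ![1, -q / 2] ⬝ᵥ φ x 0) x
          + ((Set.Iio (0 : ℝ)).indicator (fun x => ![1, q / 2] ⬝ᵥ φ x 0) x
          + (((Set.univ : Set ℝ)).indicator (fun x => ![(1 + q) / 2, (q + 2) / 4] ⬝ᵥ φ x 0) x
          + ((Set.univ : Set ℝ)).indicator (fun x => ![(1 - q) / 2, (2 - q) / 4] ⬝ᵥ φ x 0) x))) := by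
      intro x
      rw [hU0 x]
      simp only [Set.indicator_apply, Set.mem_Iio, Set.mem_univ, if_true]
      rcases le_or_gt x (-1) with hx | hx
      · have hphi : φ x 0 = 0 := by
          refine image_eq_zero_of_notMem_tsupport (f := fun p : ℝ × ℝ => φ p.1 p.2)
            (x := ((x, 0) : ℝ × ℝ)) ?_
          intro hc
          have h := (hsub hc).1
          simp only [Set.mem_setOf_eq] at h
          linarith
        rw [hphi]
        by_cases h0 : x < 0 <;> by_cases h1 : x < -1 <;> simp [h0, h1]
      · rw [if_neg (show ¬ x < -1 by linarith)]
        by_cases h0 : x < 0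
        · rw [if_pos h0, if_pos h0, if_pos h0]
          simp only [dotProduct, Fin.sum_univ_two, Matrix.cons_val_zero,
            Matrix.cons_val_one, Matrix.head_cons]
          ring
        · rw [if_neg h0, if_neg h0, if_neg h0]
          simp only [dotProduct, Fin.sum_univ_two, Matrix.cons_val_zero,
            Matrix.cons_val_one, Matrix.head_cons]
          ring
    -- initial datum integral decomposition
    have hInit : (∫ x in Set.Ioi (-1:ℝ), U0 x ⬝ᵥ φ x 0)
        = (∫ x, (Set.Iio (-1 : ℝ)).indicator (fun x => ![1 - q, (q - 2) / 2] ⬝ᵥ φ x 0) x)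
          + ((∫ x, (Set.Iio (0 : ℝ)).indicator (fun x => ![1, -q / 2] ⬝ᵥ φ x 0) x)
          + ((∫ x, (Set.Iio (0 : ℝ)).indicator (fun x => ![1, q / 2] ⬝ᵥ φ x 0) x)
          + ((∫ x, ((Set.univ : Set ℝ)).indicator (fun x => ![(1 + q) / 2, (q + 2) / 4] ⬝ᵥ φ x 0) x)
          + (∫ x, ((Set.univ : Set ℝ)).indicator (fun x => ![(1 - q) / 2, (2 - q) / 4] ⬝ᵥ φ x 0) x)))) := by
      have hzero : ∀ x ∉ Set.Ioi (-1:ℝ), U0 x ⬝ᵥ φ x 0 = 0 := by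
        intro x hx
        have hx' : x ≤ -1 := by simpa using hx
        have hphi : φ x 0 = 0 := by
          refine image_eq_zero_of_notMem_tsupport (f := fun p : ℝ × ℝ => φ p.1 p.2)
            (x := ((x, 0) : ℝ × ℝ)) ?_
          intro hc
          have h := (hsub hc).1
          simp only [Set.mem_setOf_eq] at h
          linarith
        rw [hphi, dotProduct_zero]
      rw [setIntegral_eq_integral_of_forall_compl_eq_zero hzero]
      have hfe : (fun x : ℝ => U0 x ⬝ᵥ φ x 0)
          = fun x => (Set.Iio (-1 : ℝ)).indicator (fun x => ![1 - q, (q - 2) / 2] ⬝ᵥ φ x 0) x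
            + ((Set.Iio (0 : ℝ)).indicator (fun x => ![1, -q / 2] ⬝ᵥ φ x 0) x
            + ((Set.Iio (0 : ℝ)).indicator (fun x => ![1, q / 2] ⬝ᵥ φ x 0) x
            + (((Set.univ : Set ℝ)).indicator (fun x => ![(1 + q) / 2, (q + 2) / 4] ⬝ᵥ φ x 0) x
            + ((Set.univ : Set ℝ)).indicator (fun x => ![(1 - q) / 2, (2 - q) / 4] ⬝ᵥ φ x 0) x))) := funext hInitPt
      have i1 : (∫ x : ℝ, ((Set.Iio (-1 : ℝ)).indicator (fun x => ![1 - q, (q - 2) / 2] ⬝ᵥ φ x 0) x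
            + ((Set.Iio (0 : ℝ)).indicator (fun x => ![1, -q / 2] ⬝ᵥ φ x 0) x
            + ((Set.Iio (0 : ℝ)).indicator (fun x => ![1, q / 2] ⬝ᵥ φ x 0) x
            + (((Set.univ : Set ℝ)).indicator (fun x => ![(1 + q) / 2, (q + 2) / 4] ⬝ᵥ φ x 0) x
            + (((Set.univ : Set ℝ)).indicator (fun x => ![(1 - q) / 2, (2 - q) / 4] ⬝ᵥ φ x 0) x))))))
          = (∫ x : ℝ, (Set.Iio (-1 : ℝ)).indicator (fun x => ![1 - q, (q - 2) / 2] ⬝ᵥ φ x 0) x) + ∫ x : ℝ, ((Set.Iio (0 : ℝ)).indicator (fun x => ![1, -q / 2] ⬝ᵥ φ x 0) x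
            + ((Set.Iio (0 : ℝ)).indicator (fun x => ![1, q / 2] ⬝ᵥ φ x 0) x
            + (((Set.univ : Set ℝ)).indicator (fun x => ![(1 + q) / 2, (q + 2) / 4] ⬝ᵥ φ x 0) x
            + (((Set.univ : Set ℝ)).indicator (fun x => ![(1 - q) / 2, (2 - q) / 4] ⬝ᵥ φ x 0) x)))) :=
        integral_add hJ1 ((hJ2.add (hJ3.add (hJ4.add hJ5))))
      have i2 : (∫ x : ℝ, ((Set.Iio (0 : ℝ)).indicator (fun x => ![1, -q / 2] ⬝ᵥ φ x 0) x
            + ((Set.Iio (0 : ℝ)).indicator (fun x => ![1, q / 2] ⬝ᵥ φ x 0) x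
            + (((Set.univ : Set ℝ)).indicator (fun x => ![(1 + q) / 2, (q + 2) / 4] ⬝ᵥ φ x 0) x
            + (((Set.univ : Set ℝ)).indicator (fun x => ![(1 - q) / 2, (2 - q) / 4] ⬝ᵥ φ x 0) x)))))
          = (∫ x : ℝ, (Set.Iio (0 : ℝ)).indicator (fun x => ![1, -q / 2] ⬝ᵥ φ x 0) x) + ∫ x : ℝ, ((Set.Iio (0 : ℝ)).indicator (fun x => ![1, q / 2] ⬝ᵥ φ x 0) x
            + (((Set.univ : Set ℝ)).indicator (fun x => ![(1 + q) / 2, (q + 2) / 4] ⬝ᵥ φ x 0) x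
            + (((Set.univ : Set ℝ)).indicator (fun x => ![(1 - q) / 2, (2 - q) / 4] ⬝ᵥ φ x 0) x))) :=
        integral_add hJ2 ((hJ3.add (hJ4.add hJ5)))
      have i3 : (∫ x : ℝ, ((Set.Iio (0 : ℝ)).indicator (fun x => ![1, q / 2] ⬝ᵥ φ x 0) x
            + (((Set.univ : Set ℝ)).indicator (fun x => ![(1 + q) / 2, (q + 2) / 4] ⬝ᵥ φ x 0) x
            + (((Set.univ : Set ℝ)).indicator (fun x => ![(1 - q) / 2, (2 - q) / 4] ⬝ᵥ φ x 0) x))))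
          = (∫ x : ℝ, (Set.Iio (0 : ℝ)).indicator (fun x => ![1, q / 2] ⬝ᵥ φ x 0) x) + ∫ x : ℝ, (((Set.univ : Set ℝ)).indicator (fun x => ![(1 + q) / 2, (q + 2) / 4] ⬝ᵥ φ x 0) x
            + (((Set.univ : Set ℝ)).indicator (fun x => ![(1 - q) / 2, (2 - q) / 4] ⬝ᵥ φ x 0) x)) :=
        integral_add hJ3 ((hJ4.add hJ5))
      have i4 : (∫ x : ℝ, (((Set.univ : Set ℝ)).indicator (fun x => ![(1 + q) / 2, (q + 2) / 4] ⬝ᵥ φ x 0) x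
            + (((Set.univ : Set ℝ)).indicator (fun x => ![(1 - q) / 2, (2 - q) / 4] ⬝ᵥ φ x 0) x)))
          = (∫ x : ℝ, ((Set.univ : Set ℝ)).indicator (fun x => ![(1 + q) / 2, (q + 2) / 4] ⬝ᵥ φ x 0) x) + ∫ x : ℝ, ((Set.univ : Set ℝ)).indicator (fun x => ![(1 - q) / 2, (2 - q) / 4] ⬝ᵥ φ x 0) x :=
        integral_add hJ4 hJ5
      rw [hfe, i1, i2, i3, i4]
    rw [hAB, hs1, hs2, hs3, hs4, key1, key2, key3, key4, key5, hInit]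
    ring
  · -- part (b)
    intro t ht
    have hpos : -1 < -1 + (1 + q) * t := by nlinarith [ht.1]
    have hev : (fun _ : ℝ => Ubar) =ᶠ[nhdsWithin (-1) (Set.Ioi (-1))]
        (fun x => Usol x t) := by
      filter_upwards [Ioo_mem_nhdsGT_of_mem (Set.left_mem_Ico.mpr hpos)] with x hx
      rw [hUsol x t, if_pos (by linarith [hx.2] : x + 1 < (1 + q) * t), hUbar]
    exact Filter.Tendsto.congr' hev tendsto_const_nhds
  · -- part (c)
    subst hUl hUbar hRt1
    funext i
    have hq1' : q + 1 ≠ 0 := by positivity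
    fin_cases i <;>
      simp [Pi.sub_apply, Pi.smul_apply, smul_eq_mul] <;>
      field_simp <;> ring
end
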